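/- arXiv:2406.18879 — 8 statements merged into one kernel-verified Lean document; each statement's English description precedes it below -/
import Mathlib

section
/- Let R be a commutative ring and let I = (f_1, ..., f_m) be an ideal of R generated by a regular sequence f_1, ..., f_m. Then for all positive integers n, i with n ≥ i > 0 and every index j ∈ {1, ..., m}, the colon ideal (I^n : f_j^i) = { r ∈ R | r·f_j^i ∈ I^n } equals I^{n-i}. -/
/-!
Write `J_k = (f_0, …, f_{k-1})`. By induction on `k` the sequence is quasi-regular on its first
`k` terms: a form `F` of degree `d` in `X_0, …, X_{k-1}` with `F(f) ∈ J_k^(d+1)` has all its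
coefficients in `J_k`. For the step, split `F = X_k H + G` with `G` free of `X_k`, and use that
`f_k` is a nonzerodivisor modulo every power `J_k^e`; this in turn follows from quasi-regularity
at level `k`, since `C f_k` is a nonzerodivisor on `(R ⧸ J_k)[X]`.

For the whole ideal `I`, the same argument with `X_j^i` in place of `C f_k` shows that
`r ∈ I^t` and `r f_j^i ∈ I^(t+i+1)` force `r ∈ I^(t+1)`, whence `(I^n : f_j^i) ⊆ I^(n-i)`.
-/

open MvPolynomial

section

variable {R σ : Type*} [CommRing R]

theorem Ideal.sup_pow_succ_le (J K : Ideal R) :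
    ∀ e : ℕ, (J ⊔ K) ^ (e + 1) ≤ J ^ (e + 1) ⊔ K * (J ⊔ K) ^ e
  | 0 => by simp
  | e + 1 => calc
      (J ⊔ K) ^ (e + 2) = (J ⊔ K) ^ (e + 1) * (J ⊔ K) := pow_succ _ _
      _ ≤ (J ^ (e + 1) ⊔ K * (J ⊔ K) ^ e) * (J ⊔ K) :=
        Ideal.mul_mono_left (Ideal.sup_pow_succ_le J K e)
      _ ≤ J ^ (e + 2) ⊔ K * (J ⊔ K) ^ (e + 1) := by
        rw [Ideal.sup_mul, mul_assoc, ← pow_succ, Ideal.mul_sup, ← pow_succ]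
        refine sup_le (sup_le le_sup_left ?_) le_sup_right
        rw [mul_comm]
        exact le_sup_of_le_right
          (Ideal.mul_mono_right (Ideal.pow_right_mono le_sup_left _))

section Colon

variable {J : Ideal R} {x : R} {e : ℕ}

theorem Ideal.mem_sup_span_singleton_pow_of_mul_mem (hx : ∀ r, r * x ∈ J ^ e → r ∈ J ^ e)
    {y : R} (hy : y * x ∈ J ^ e ⊔ (J ⊔ Ideal.span {x}) ^ (e + 1)) :
    y ∈ (J ⊔ Ideal.span {x}) ^ e := by
  have hle : J ^ e ⊔ (J ⊔ Ideal.span {x}) ^ (e + 1) ≤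
      J ^ e ⊔ Ideal.span {x} * (J ⊔ Ideal.span {x}) ^ e :=
    sup_le le_sup_left <| (Ideal.sup_pow_succ_le J _ e).trans <|
      sup_le_sup_right (Ideal.pow_le_pow_right e.le_succ) _
  obtain ⟨a, ha, c, hc, hac⟩ := Submodule.mem_sup.mp (hle hy)
  obtain ⟨b, hb, rfl⟩ := Ideal.mem_span_singleton_mul.mp hc
  have hyb : y - b ∈ J ^ e := hx _ (by rw [sub_mul, ← hac]; simpa [mul_comm] using ha)
  simpa using add_mem (Ideal.pow_right_mono le_sup_left e hyb) hb

theorem Ideal.exists_sub_mul_mem_pow_succ (hx : ∀ r, r * x ∈ J ^ e → r ∈ J ^ e)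
    {y : R} (hyJ : y ∈ J ^ e) (hy : y ∈ (J ⊔ Ideal.span {x}) ^ (e + 1)) :
    ∃ b ∈ J ^ e, y - x * b ∈ J ^ (e + 1) := by
  obtain ⟨a, ha, c, hc, rfl⟩ := Submodule.mem_sup.mp (Ideal.sup_pow_succ_le J _ e hy)
  obtain ⟨b, hb, rfl⟩ := Ideal.mem_span_singleton_mul.mp hc
  refine ⟨b, hx b ?_, by simpa using ha⟩
  have : b * x = (a + x * b) - a := by ring
  rw [this]
  exact sub_mem hyJ (Ideal.pow_le_pow_right e.le_succ ha)

end Colon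

namespace MvPolynomial

variable {f : σ → R} {s : Set σ} {I : Ideal R} {F : MvPolynomial σ R} {d : ℕ}

theorem eval_mem_mul_span_pow (hF : F.IsHomogeneous d) (hFs : F ∈ supported R s)
    (hFI : F ∈ Ideal.map C I) : eval f F ∈ I * Ideal.span (f '' s) ^ d := by
  rw [eval_eq]
  refine Ideal.sum_mem _ fun a ha => Ideal.mul_mem_mul (mem_map_C_iff.mp hFI a) ?_
  rw [hF.degree_eq_sum_deg_support ha, ← Finset.prod_pow_eq_pow_sum]
  refine Ideal.prod_mem_prod fun i hi => Ideal.pow_mem_pow (Ideal.subset_span ?_) _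
  exact Set.mem_image_of_mem f
    (mem_supported.mp hFs ((mem_vars_iff_mem_support i).mpr ⟨a, ha, hi⟩))

theorem eval_mem_span_pow (hF : F.IsHomogeneous d) (hFs : F ∈ supported R s) :
    eval f F ∈ Ideal.span (f '' s) ^ d := by
  simpa using eval_mem_mul_span_pow (f := f) (I := ⊤) hF hFs (by rw [Ideal.map_top]; trivial)

theorem exists_isHomogeneous_eval_eq_of_mem_span_pow {y : R}
    (hy : y ∈ Ideal.span (f '' s) ^ d) :
    ∃ P : MvPolynomial σ R, P.IsHomogeneous d ∧ P ∈ supported R s ∧ eval f P = y := by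
  rw [Set.image_eq_range, Ideal.mem_span_pow_iff_exists_isHomogeneous] at hy
  obtain ⟨P, hP, rfl⟩ := hy
  exact ⟨rename Subtype.val P, hP.rename_isHomogeneous,
    by rw [supported_eq_range_rename]; exact ⟨P, rfl⟩, eval_rename _ _ _⟩

theorem mem_map_C_of_isHomogeneous_zero (hF : F.IsHomogeneous 0) (h : eval f F ∈ I) :
    F ∈ Ideal.map C I := by
  rw [← totalDegree_zero_iff_isHomogeneous, totalDegree_eq_zero_iff_eq_C] at hF
  rw [hF] at h ⊢
  exact Ideal.mem_map_of_mem C (by simpa using h)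

theorem mem_map_C_of_C_mul_mem {x : R} (hx : ∀ r, r * x ∈ I → r ∈ I)
    (h : C x * F ∈ Ideal.map C I) : F ∈ Ideal.map C I :=
  mem_map_C_iff.mpr fun a => hx _ <| by
    rw [mul_comm, ← coeff_C_mul]
    exact mem_map_C_iff.mp h a

theorem mem_map_C_of_X_pow_mul_mem (j : σ) (i : ℕ) (h : X j ^ i * F ∈ Ideal.map C I) :
    F ∈ Ideal.map C I :=
  mem_map_C_iff.mpr fun a => by
    simpa [X_pow_eq_monomial] using mem_map_C_iff.mp h (Finsupp.single j i + a)

theorem exists_eq_X_mul_add {j : σ} (hF : F.IsHomogeneous (d + 1))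
    (hFs : F ∈ supported R (insert j s)) :
    ∃ H G : MvPolynomial σ R, F = X j * H + G ∧ H.IsHomogeneous d ∧
      H ∈ supported R (insert j s) ∧ G.IsHomogeneous (d + 1) ∧ G ∈ supported R s := by
  set u : σ →₀ ℕ := Finsupp.single j 1
  have hG : ∀ a, coeff a (F.modMonomial u) ≠ 0 → ¬ u ≤ a ∧ coeff a F ≠ 0 := by
    intro a ha
    by_cases hua : u ≤ a
    · exact absurd (coeff_modMonomial_of_le F hua) ha
    · exact ⟨hua, by rwa [coeff_modMonomial_of_not_le F hua] at ha⟩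
  refine ⟨F.divMonomial u, F.modMonomial u, (divMonomial_add_modMonomial F u).symm, ?_, ?_,
    fun a ha => hF (hG a ha).2, ?_⟩
  · intro a ha
    have := hF (by rwa [coeff_divMonomial] at ha)
    rw [map_add, Finsupp.weight_single, smul_eq_mul, Pi.one_apply, mul_one, add_comm] at this
    exact Nat.succ_injective this
  · rw [mem_supported] at hFs ⊢
    intro i hi
    obtain ⟨a, ha, hia⟩ := (mem_vars_iff_mem_support i).mp hi
    rw [mem_support_iff, coeff_divMonomial] at ha
    exact hFs ((mem_vars_iff_mem_support i).mpr
      ⟨u + a, mem_support_iff.mpr ha, Finsupp.support_mono le_add_self hia⟩)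
  · rw [mem_supported] at hFs ⊢
    intro i hi
    obtain ⟨a, ha, hia⟩ := (mem_vars_iff_mem_support i).mp hi
    obtain ⟨hua, hFa⟩ := hG a (mem_support_iff.mp ha)
    have hij : i ≠ j := by
      rintro rfl
      exact hua (Finsupp.single_le_iff.mpr
        (Nat.one_le_iff_ne_zero.mpr (Finsupp.mem_support_iff.mp hia)))
    exact (hFs ((mem_vars_iff_mem_support i).mpr
      ⟨a, mem_support_iff.mpr hFa, hia⟩)).resolve_left hij

end MvPolynomial

/-- Elementwise form of the injectivity of `(R ⧸ J)[X_i | i ∈ s] → gr_J R`, `X_i ↦ f i`,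
where `J = (f i | i ∈ s)`: Matsumura's quasi-regularity of the family `f` on `s`. -/
def IsQuasiRegularOn (f : σ → R) (s : Set σ) : Prop :=
  ∀ (d : ℕ) (F : MvPolynomial σ R), F.IsHomogeneous d → F ∈ supported R s →
    eval f F ∈ Ideal.span (f '' s) ^ (d + 1) → F ∈ Ideal.map C (Ideal.span (f '' s))

theorem isQuasiRegularOn_empty (f : σ → R) : IsQuasiRegularOn f ∅ := by
  intro d F _ hFs hev
  rw [supported_empty, Algebra.mem_bot] at hFs
  obtain ⟨c, rfl⟩ := hFs
  exact mem_map_C_of_isHomogeneous_zero (isHomogeneous_C σ c)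
    (Ideal.pow_le_self d.succ_ne_zero hev)

namespace IsQuasiRegularOn

variable {f : σ → R} {s : Set σ}

theorem mem_pow_of_mul_eval_mem (hs : IsQuasiRegularOn f s) {Q : MvPolynomial σ R} {e : ℕ}
    (hQ : Q.IsHomogeneous e) (hQs : Q ∈ supported R s)
    (hQreg : ∀ P, Q * P ∈ Ideal.map C (Ideal.span (f '' s)) →
      P ∈ Ideal.map C (Ideal.span (f '' s))) (t : ℕ) {r : R}
    (hr : r * eval f Q ∈ Ideal.span (f '' s) ^ (t + e)) : r ∈ Ideal.span (f '' s) ^ t := by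
  induction t generalizing r with
  | zero => simp
  | succ t ih =>
    obtain ⟨P, hP, hPs, rfl⟩ := exists_isHomogeneous_eval_eq_of_mem_span_pow
      (ih (Ideal.pow_le_pow_right (by omega) hr))
    have hQP : Q * P ∈ Ideal.map C (Ideal.span (f '' s)) := by
      refine hs (e + t) _ (hQ.mul hP) (mul_mem hQs hPs) ?_
      rw [map_mul, mul_comm, add_comm e, ← add_right_comm]
      exact hr
    rw [pow_succ']
    exact eval_mem_mul_span_pow hP hPs (hQreg P hQP)

theorem insert (hs : IsQuasiRegularOn f s) {j : σ}
    (hreg : ∀ r, r * f j ∈ Ideal.span (f '' s) → r ∈ Ideal.span (f '' s)) :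
    IsQuasiRegularOn f (insert j s) := by
  set J := Ideal.span (f '' s)
  have hcolon (e : ℕ) (r : R) (hr : r * f j ∈ J ^ e) : r ∈ J ^ e :=
    hs.mem_pow_of_mul_eval_mem (isHomogeneous_C σ (f j)) (Subalgebra.algebraMap_mem _ (f j))
      (fun _ => mem_map_C_of_C_mul_mem hreg) e (by simpa using hr)
  have hfj : f j ∈ J ⊔ Ideal.span {f j} := Ideal.mem_sup_right (Ideal.mem_span_singleton_self _)
  unfold IsQuasiRegularOn
  rw [Set.image_insert_eq, Ideal.span_insert, sup_comm]
  intro d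
  induction d with
  | zero => exact fun F hF _ hev => mem_map_C_of_isHomogeneous_zero hF (by simpa using hev)
  | succ d ih =>
    intro F hF hFs hev
    obtain ⟨H, G, rfl, hH, hHs, hG, hGs⟩ := exists_eq_X_mul_add hF hFs
    have hGJ : eval f G ∈ J ^ (d + 1) := eval_mem_span_pow hG hGs
    have hHJ' : eval f H ∈ (J ⊔ Ideal.span {f j}) ^ (d + 1) := by
      refine Ideal.mem_sup_span_singleton_pow_of_mul_mem (hcolon _) ?_
      have : eval f H * f j = eval f (X j * H + G) - eval f G := by simp [mul_comm]
      rw [this]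
      exact sub_mem (Ideal.mem_sup_right hev) (Ideal.mem_sup_left hGJ)
    have hGJ' : eval f G ∈ (J ⊔ Ideal.span {f j}) ^ (d + 2) := by
      have : eval f G = eval f (X j * H + G) - f j * eval f H := by simp
      rw [this]
      refine sub_mem hev ?_
      rw [pow_succ']
      exact Ideal.mul_mem_mul hfj hHJ'
    obtain ⟨_, hb, hGb⟩ := Ideal.exists_sub_mul_mem_pow_succ (hcolon _) hGJ hGJ'
    obtain ⟨P, hP, hPs, rfl⟩ := exists_isHomogeneous_eval_eq_of_mem_span_pow hb
    have hGP : G - C (f j) * P ∈ Ideal.map C J :=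
      hs (d + 1) _ (hG.sub (hP.C_mul _))
        (sub_mem hGs (mul_mem (Subalgebra.algebraMap_mem _ _) hPs)) (by simpa using hGb)
    refine add_mem (Ideal.mul_mem_left _ _ (ih H hH hHs hHJ')) ?_
    rw [← sub_add_cancel G (C (f j) * P)]
    exact add_mem (Ideal.map_mono le_sup_left hGP)
      (Ideal.mul_mem_right _ _ (Ideal.mem_map_of_mem C hfj))

end IsQuasiRegularOn

theorem isQuasiRegularOn_univ_of_regular {m : ℕ} (f : Fin m → R)
    (hreg : ∀ k : Fin m, ∀ r : R,
      r * f k ∈ Ideal.span (f '' {l : Fin m | l < k}) →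
      r ∈ Ideal.span (f '' {l : Fin m | l < k})) :
    IsQuasiRegularOn f Set.univ := by
  have h (k : ℕ) (hk : k ≤ m) : IsQuasiRegularOn f {l : Fin m | (l : ℕ) < k} := by
    induction k with
    | zero => simpa using isQuasiRegularOn_empty f
    | succ k ih =>
      have hins :
          {l : Fin m | (l : ℕ) < k + 1} = insert ⟨k, hk⟩ {l : Fin m | (l : ℕ) < k} := by
        ext l
        simp only [Set.mem_ofPred_eq, Set.mem_insert_iff, Fin.ext_iff]
        omega
      rw [hins]
      exact (ih (by omega)).insert (hreg ⟨k, hk⟩)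
  simpa using h m le_rfl

end

theorem colon_pow_of_regular_sequence_general
    {R : Type*} [CommRing R] {m : ℕ} (f : Fin m → R)
    (hreg : ∀ k : Fin m, ∀ r : R,
      r * f k ∈ Ideal.span (f '' {l : Fin m | l < k}) →
      r ∈ Ideal.span (f '' {l : Fin m | l < k}))
    (I : Ideal R) (hI : I = Ideal.span (Set.range f))
    (n i : ℕ) (hni : i ≤ n) (j : Fin m) :
    Submodule.colon (I ^ n) (Ideal.span {f j ^ i}) = I ^ (n - i) := by
  rw [← Set.image_univ] at hI
  subst hI
  ext r
  rw [Ideal.mem_colon_span_singleton]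
  constructor
  · intro hr
    refine (isQuasiRegularOn_univ_of_regular f hreg).mem_pow_of_mul_eval_mem
      (isHomogeneous_X_pow j i) (by simp [supported_univ])
      (fun _ => mem_map_C_of_X_pow_mul_mem j i) (n - i) ?_
    simpa [Nat.sub_add_cancel hni] using hr
  · intro hr
    rw [← Nat.sub_add_cancel hni, pow_add]
    exact Ideal.mul_mem_mul hr
      (Ideal.pow_mem_pow (Ideal.subset_span (Set.mem_image_of_mem f (Set.mem_univ j))) i)

/-- Lemma 2.10: if `I = (f 0, ..., f (m-1))` is generated by a regular sequence,
then the colon ideal `(I^n : f_j^i)` equals `I^(n-i)` for `n ≥ i > 0`. -/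
theorem colon_pow_of_regular_sequence
    {R : Type*} [CommRing R] {m : ℕ} (f : Fin m → R)
    (hreg : ∀ k : Fin m, ∀ r : R,
      r * f k ∈ Ideal.span (f '' {l : Fin m | l < k}) →
      r ∈ Ideal.span (f '' {l : Fin m | l < k}))
    (hproper : Ideal.span (Set.range f) ≠ ⊤)
    (I : Ideal R) (hI : I = Ideal.span (Set.range f))
    (n i : ℕ) (hi : 0 < i) (hni : i ≤ n) (j : Fin m) :
    Submodule.colon (I ^ n) (Ideal.span {f j ^ i}) = I ^ (n - i) :=
  colon_pow_of_regular_sequence_general f hreg I hI n i hni j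
end

section
/- Let R be a commutative ring and let I = (f_1, ..., f_m) be an ideal generated by a regular sequence f_1, ..., f_m. If a ∈ I^ℓ \ I^{ℓ+1} for some nonnegative integer ℓ, then for every index j and every positive integer i, one has a·f_j^i ∈ I^{ℓ+i} \ I^{ℓ+i+1}. -/
/-!
A regular sequence is quasi-regular (Matsumura, Thm 16.2): a form `F` of degree `d` with
`F(f) ∈ I ^ (d + 1)` has all its coefficients in `I`, i.e. `gr_I R ≅ (R ⧸ I)[X₁, …, Xₘ]`.
There `X_j` is a nonzerodivisor: `b ∈ I ^ e` and `f_j b ∈ I ^ (e + 2)` force `b ∈ I ^ (e + 1)`,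
and the claim follows by induction on `i`.

Quasi-regularity of `f₁, …, f_k` is proved by induction on `k`. Put `J = (f₁, …, f_{k-1})` and
`x = f_k`. Quasi-regularity of `J` and regularity of `x` modulo `J` make `x` a nonzerodivisor
modulo every `J ^ n`. Split a form of degree `d + 1` as `F = X_k Q + H` with `H` free of `X_k`,
and write `F(f) = x q + h` with `q ∈ (J, x) ^ (d + 1)` and `h ∈ J ^ (d + 2)`. Cancelling `x`
gives `Q(f) - q ∈ J ^ (d + 1)`, so induction on the degree applies to `Q`. Writing
`Q(f) - q = W(f)`, quasi-regularity of `J` applies to `H + x W`, whose value is `h`.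
-/

open MvPolynomial

section CommSemiring

variable {R σ : Type*} [CommSemiring R] {s : Set σ} {F : MvPolynomial σ R}

theorem MvPolynomial.mem_supported_iff_forall_mem_support :
    F ∈ supported R s ↔ ∀ α ∈ F.support, ∀ l ∈ α.support, l ∈ s := by
  simp only [mem_supported, Set.subset_def, Finset.mem_coe, mem_vars_iff_mem_support]
  grind

theorem MvPolynomial.IsHomogeneous.divMonomial {n : ℕ} (m : σ →₀ ℕ)
    (hF : F.IsHomogeneous (m.degree + n)) : (F.divMonomial m).IsHomogeneous n := by
  have hw : (Finsupp.weight 1 : (σ →₀ ℕ) →+ ℕ) = Finsupp.degree :=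
    Finsupp.degree_eq_weight_one.symm
  intro α hα
  have := hF hα
  simp only [hw, map_add] at this ⊢
  omega

theorem MvPolynomial.divMonomial_mem_supported (m : σ →₀ ℕ) (hF : F ∈ supported R s) :
    F.divMonomial m ∈ supported R s := by
  rw [mem_supported_iff_forall_mem_support] at hF ⊢
  intro α hα l hl
  rw [mem_support_iff, coeff_divMonomial, ← mem_support_iff] at hα
  refine hF (m + α) hα l ?_
  simp only [Finsupp.mem_support_iff, Finsupp.add_apply] at hl ⊢
  omega

theorem MvPolynomial.coeff_modMonomial_single_ne_zero {i : σ} {α : σ →₀ ℕ}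
    (h : (F.modMonomial (Finsupp.single i 1)).coeff α ≠ 0) : F.coeff α ≠ 0 ∧ α i = 0 := by
  by_cases hle : Finsupp.single i 1 ≤ α
  · exact absurd (coeff_modMonomial_of_le F hle) h
  · rw [coeff_modMonomial_of_not_le F hle] at h
    rw [Finsupp.single_le_iff] at hle
    exact ⟨h, by omega⟩

theorem MvPolynomial.exists_eq_X_mul_add_of_mem_supported_insert {i : σ} {n : ℕ}
    (hFs : F ∈ supported R (insert i s)) (hF : F.IsHomogeneous (n + 1)) :
    ∃ Q ∈ supported R (insert i s), Q.IsHomogeneous n ∧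
      ∃ H ∈ supported R s, H.IsHomogeneous (n + 1) ∧ F = X i * Q + H := by
  refine ⟨_, divMonomial_mem_supported _ hFs,
    IsHomogeneous.divMonomial _ (by rwa [Finsupp.degree_single, add_comm]), _, ?_,
    fun α hα => hF (coeff_modMonomial_single_ne_zero hα).1,
    (divMonomial_add_modMonomial_single F i).symm⟩
  rw [mem_supported_iff_forall_mem_support] at hFs ⊢
  intro α hα l hl
  obtain ⟨hFα, hαi⟩ := coeff_modMonomial_single_ne_zero (mem_support_iff.mp hα)
  rcases hFs α (mem_support_iff.mpr hFα) l hl with rfl | hls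
  · exact absurd hαi (Finsupp.mem_support_iff.mp hl)
  · exact hls

theorem MvPolynomial.exists_isHomogeneous_eval_eq_of_mem_pow {f : σ → R} {n : ℕ} {y : R}
    (hy : y ∈ Ideal.span (f '' s) ^ n) :
    ∃ F ∈ supported R s, F.IsHomogeneous n ∧ eval f F = y := by
  rw [Set.image_eq_range, Ideal.mem_span_pow_iff_exists_isHomogeneous] at hy
  obtain ⟨p, hp, rfl⟩ := hy
  refine ⟨rename Subtype.val p, ?_, hp.rename_isHomogeneous, by rw [eval_rename]; rfl⟩
  rw [supported_eq_range_rename]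
  exact ⟨p, rfl⟩

theorem MvPolynomial.mem_map_C_of_isHomogeneous_zero_s1 {f : σ → R} {K : Ideal R}
    (hF : F.IsHomogeneous 0) (hFK : eval f F ∈ K) : F ∈ Ideal.map C K := by
  rw [← totalDegree_zero_iff_isHomogeneous, totalDegree_eq_zero_iff_eq_C] at hF
  rw [hF, eval_C] at hFK
  rw [hF]
  exact Ideal.mem_map_of_mem C hFK

theorem Ideal.sup_span_singleton_pow_succ_le (J : Ideal R) (x : R) (n : ℕ) :
    (J ⊔ span {x}) ^ (n + 1) ≤ J ^ (n + 1) ⊔ span {x} * (J ⊔ span {x}) ^ n := by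
  induction n with
  | zero => simp
  | succ n ih =>
    have hx : span {x} * J ^ (n + 1) ≤ span {x} * (J ⊔ span {x}) ^ (n + 1) := by
      gcongr
      exact le_sup_left
    calc (J ⊔ span {x}) ^ (n + 2) = (J ⊔ span {x}) * (J ⊔ span {x}) ^ (n + 1) := pow_succ' _ _
      _ ≤ (J ⊔ span {x}) * (J ^ (n + 1) ⊔ span {x} * (J ⊔ span {x}) ^ n) := by gcongr
      _ = J ^ (n + 2) ⊔ span {x} * J ^ (n + 1) ⊔ span {x} * (J ⊔ span {x}) ^ (n + 1) := by
        rw [mul_sup, sup_mul, mul_left_comm, ← pow_succ', ← pow_succ']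
      _ ≤ J ^ (n + 2) ⊔ span {x} * (J ⊔ span {x}) ^ (n + 1) :=
        sup_le (sup_le le_sup_left (hx.trans le_sup_right)) le_sup_right

end CommSemiring

section CommRing

variable {R σ : Type*} [CommRing R] {s : Set σ} {f : σ → R}

theorem MvPolynomial.eval_mem_mul_pow {F : MvPolynomial σ R} {K : Ideal R} {n : ℕ}
    (hFs : F ∈ supported R s) (hF : F.IsHomogeneous n) (hFK : F ∈ Ideal.map C K) :
    eval f F ∈ K * Ideal.span (f '' s) ^ n := by
  rw [mem_supported_iff_forall_mem_support] at hFs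
  rw [eval_eq]
  refine Ideal.sum_mem _ fun α hα => Ideal.mul_mem_mul (mem_map_C_iff.mp hFK α) ?_
  have hdeg : Finsupp.degree α = n := by
    rw [Finsupp.degree_eq_weight_one]
    exact hF (mem_support_iff.mp hα)
  rw [← hdeg, Finsupp.degree_apply, ← Finset.prod_pow_eq_pow_sum]
  exact Ideal.prod_mem_prod fun l hl =>
    Ideal.pow_mem_pow (Ideal.subset_span (Set.mem_image_of_mem f (hFs α hα l hl))) _

theorem MvPolynomial.eval_mem_pow {F : MvPolynomial σ R} {n : ℕ}
    (hFs : F ∈ supported R s) (hF : F.IsHomogeneous n) :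
    eval f F ∈ Ideal.span (f '' s) ^ n := by
  have hFtop : F ∈ Ideal.map C (⊤ : Ideal R) := by
    rw [Ideal.map_top]
    exact Submodule.mem_top
  simpa using eval_mem_mul_pow (f := f) hFs hF hFtop

/-- Quasi-regularity of `f` on `s`: with `J` the span of `f '' s`, the natural surjection from
the polynomial ring over `R ⧸ J` in the variables `s` onto `gr_J R` is injective. -/
def QuasiRegularOn (f : σ → R) (s : Set σ) : Prop :=
  ∀ (d : ℕ) (F : MvPolynomial σ R), F ∈ supported R s → F.IsHomogeneous d →
    eval f F ∈ Ideal.span (f '' s) ^ (d + 1) → F ∈ Ideal.map C (Ideal.span (f '' s))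

theorem quasiRegularOn_empty : QuasiRegularOn f ∅ := by
  intro d F hFs _ hF
  rw [supported_empty, Algebra.mem_bot] at hFs
  obtain ⟨c, rfl⟩ := hFs
  rw [algebraMap_eq, eval_C] at hF
  exact Ideal.mem_map_of_mem C (Ideal.pow_le_self d.succ_ne_zero hF)

theorem QuasiRegularOn.mem_pow_of_mul_mem_pow (hf : QuasiRegularOn f s) {x : R}
    (hx : ∀ r, r * x ∈ Ideal.span (f '' s) → r ∈ Ideal.span (f '' s)) {c : R} :
    ∀ {n : ℕ}, x * c ∈ Ideal.span (f '' s) ^ n → c ∈ Ideal.span (f '' s) ^ n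
  | 0, _ => by simp
  | n + 1, hxc => by
    have hc : c ∈ Ideal.span (f '' s) ^ n :=
      hf.mem_pow_of_mul_mem_pow hx (Ideal.pow_le_pow_right n.le_succ hxc)
    obtain ⟨G, hGs, hG, rfl⟩ := exists_isHomogeneous_eval_eq_of_mem_pow hc
    have hxG : C x * G ∈ Ideal.map C (Ideal.span (f '' s)) :=
      hf n _ (Subalgebra.mul_mem _ (Subalgebra.algebraMap_mem _ x) hGs) (hG.C_mul x)
        (by rwa [map_mul, eval_C])
    have hGJ : G ∈ Ideal.map C (Ideal.span (f '' s)) := by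
      rw [mem_map_C_iff] at hxG ⊢
      intro α
      have := hxG α
      rw [coeff_C_mul, mul_comm] at this
      exact hx _ this
    simpa only [pow_succ'] using eval_mem_mul_pow hGs hG hGJ

theorem quasiRegularOn_insert (hf : QuasiRegularOn f s) {i : σ}
    (hi : ∀ r, r * f i ∈ Ideal.span (f '' s) → r ∈ Ideal.span (f '' s)) :
    QuasiRegularOn f (insert i s) := by
  unfold QuasiRegularOn
  set J := Ideal.span (f '' s)
  set J' := Ideal.span (f '' insert i s)
  have hJ' : J' = J ⊔ Ideal.span {f i} := by
    simp only [J', J]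
    rw [Set.image_insert_eq, Ideal.span_insert, sup_comm]
  have hJJ' : J ≤ J' := Ideal.span_mono (Set.image_mono (Set.subset_insert i s))
  have hfi : f i ∈ J' := Ideal.subset_span (Set.mem_image_of_mem f (Set.mem_insert i s))
  intro d
  induction d with
  | zero =>
    intro F _ hF hev
    exact mem_map_C_of_isHomogeneous_zero_s1 hF (by simpa using hev)
  | succ d ih =>
    intro F hFs hF hev
    obtain ⟨Q, hQs, hQ, H, hHs, hH, rfl⟩ := exists_eq_X_mul_add_of_mem_supported_insert hFs hF
    rw [map_add, map_mul, eval_X] at hev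
    obtain ⟨h, hh, _, hxq, hqh⟩ := Submodule.mem_sup.mp
      (Ideal.sup_span_singleton_pow_succ_le J (f i) (d + 1) (hJ' ▸ hev))
    obtain ⟨q, hq, rfl⟩ := Ideal.mem_span_singleton_mul.mp hxq
    have hHJ : eval f H ∈ J ^ (d + 1) := eval_mem_pow hHs hH
    have hQq : eval f Q - q ∈ J ^ (d + 1) := by
      refine hf.mem_pow_of_mul_mem_pow hi ?_
      rw [show f i * (eval f Q - q) = h - eval f H by linear_combination -hqh]
      exact sub_mem (Ideal.pow_le_pow_right (d + 1).le_succ hh) hHJ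
    have hQJ' : Q ∈ Ideal.map C J' := by
      refine ih Q hQs hQ ?_
      rw [show eval f Q = (eval f Q - q) + q by ring, hJ']
      exact add_mem (Ideal.pow_right_mono le_sup_left _ hQq) hq
    obtain ⟨W, hWs, hW, hWe⟩ := exists_isHomogeneous_eval_eq_of_mem_pow hQq
    have hHW : H + C (f i) * W ∈ Ideal.map C J := by
      refine hf (d + 1) _ (add_mem hHs (Subalgebra.mul_mem _ (Subalgebra.algebraMap_mem _ _) hWs))
        (hH.add (hW.C_mul _)) ?_
      rw [map_add, map_mul, eval_C, hWe, show eval f H + f i * (eval f Q - q) = h by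
        linear_combination -hqh]
      exact hh
    have hHJ' : H ∈ Ideal.map C J' := by
      rw [show H = (H + C (f i) * W) - C (f i) * W by ring]
      exact sub_mem (Ideal.map_mono hJJ' hHW)
        (Ideal.mul_mem_right _ _ (Ideal.mem_map_of_mem C hfi))
    exact add_mem (Ideal.mul_mem_left _ _ hQJ') hHJ'

theorem QuasiRegularOn.mem_pow_succ_of_mul_mem_pow_add_two (hf : QuasiRegularOn f s) {j : σ}
    (hj : j ∈ s) {e : ℕ} {b : R} (hb : b ∈ Ideal.span (f '' s) ^ e)
    (hjb : f j * b ∈ Ideal.span (f '' s) ^ (e + 2)) : b ∈ Ideal.span (f '' s) ^ (e + 1) := by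
  obtain ⟨B, hBs, hB, rfl⟩ := exists_isHomogeneous_eval_eq_of_mem_pow hb
  have hXB : X j * B ∈ Ideal.map C (Ideal.span (f '' s)) :=
    hf (e + 1) _ (Subalgebra.mul_mem _ (Algebra.subset_adjoin ⟨j, hj, rfl⟩) hBs)
      (by simpa only [add_comm] using (isHomogeneous_X R j).mul hB)
      (by rwa [map_mul, eval_X])
  have hBJ : B ∈ Ideal.map C (Ideal.span (f '' s)) := by
    rw [mem_map_C_iff] at hXB ⊢
    intro α
    have := hXB (Finsupp.single j 1 + α)
    rwa [coeff_X_mul] at this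
  simpa only [pow_succ'] using eval_mem_mul_pow hBs hB hBJ

theorem QuasiRegularOn.mul_pow_mem_pow_and_not_mem_pow_succ (hf : QuasiRegularOn f s) {j : σ}
    (hj : j ∈ s) {a : R} {ℓ : ℕ} (ha : a ∈ Ideal.span (f '' s) ^ ℓ)
    (ha' : a ∉ Ideal.span (f '' s) ^ (ℓ + 1)) :
    ∀ n : ℕ, a * f j ^ n ∈ Ideal.span (f '' s) ^ (ℓ + n) ∧
      a * f j ^ n ∉ Ideal.span (f '' s) ^ (ℓ + n + 1)
  | 0 => by simpa using ⟨ha, ha'⟩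
  | n + 1 => by
    obtain ⟨hmem, hnot⟩ := hf.mul_pow_mem_pow_and_not_mem_pow_succ hj ha ha' n
    have hfj : f j ∈ Ideal.span (f '' s) := Ideal.subset_span (Set.mem_image_of_mem f hj)
    rw [pow_succ', mul_left_comm, ← add_assoc]
    refine ⟨by simpa only [pow_succ'] using Ideal.mul_mem_mul hfj hmem, fun h => hnot ?_⟩
    exact hf.mem_pow_succ_of_mul_mem_pow_add_two hj hmem h

theorem quasiRegularOn_univ_of_regular {m : ℕ} {f : Fin m → R}
    (hreg : ∀ k : Fin m, ∀ r : R,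
      r * f k ∈ Ideal.span (f '' {l : Fin m | l < k}) →
      r ∈ Ideal.span (f '' {l : Fin m | l < k})) :
    QuasiRegularOn f Set.univ := by
  have hprefix : ∀ k ≤ m, QuasiRegularOn f {l : Fin m | (l : ℕ) < k} := by
    intro k
    induction k with
    | zero => simpa using quasiRegularOn_empty (f := f)
    | succ k ih =>
      intro hk
      have hset :
          {l : Fin m | (l : ℕ) < k + 1} = insert ⟨k, hk⟩ {l : Fin m | (l : ℕ) < k} := by
        ext l
        simp only [Set.mem_ofPred_eq, Set.mem_insert_iff, Fin.ext_iff]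
        omega
      rw [hset]
      exact quasiRegularOn_insert (ih (Nat.le_of_succ_le hk)) (hreg ⟨k, hk⟩)
  simpa using hprefix m le_rfl

end CommRing

theorem mul_pow_mem_sub_of_regular_sequence_general
    {R : Type*} [CommRing R] {m : ℕ} (f : Fin m → R)
    (hreg : ∀ k : Fin m, ∀ r : R,
      r * f k ∈ Ideal.span (f '' {l : Fin m | l < k}) →
      r ∈ Ideal.span (f '' {l : Fin m | l < k}))
    (I : Ideal R) (hI : I = Ideal.span (Set.range f))
    (a : R) (ℓ : ℕ) (ha : a ∈ I ^ ℓ) (ha' : a ∉ I ^ (ℓ + 1))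
    (j : Fin m) (i : ℕ) :
    a * f j ^ i ∈ I ^ (ℓ + i) ∧ a * f j ^ i ∉ I ^ (ℓ + i + 1) := by
  rw [hI, ← Set.image_univ] at ha ha' ⊢
  exact (quasiRegularOn_univ_of_regular hreg).mul_pow_mem_pow_and_not_mem_pow_succ
    (Set.mem_univ j) ha ha' i

/-- If `I` is generated by a regular sequence and `a ∈ I^ℓ \ I^(ℓ+1)`, then
`a * f_j^i ∈ I^(ℓ+i) \ I^(ℓ+i+1)`. -/
theorem mul_pow_mem_sub_of_regular_sequence
    {R : Type*} [CommRing R] {m : ℕ} (f : Fin m → R)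
    (hreg : ∀ k : Fin m, ∀ r : R,
      r * f k ∈ Ideal.span (f '' {l : Fin m | l < k}) →
      r ∈ Ideal.span (f '' {l : Fin m | l < k}))
    (hproper : Ideal.span (Set.range f) ≠ ⊤)
    (I : Ideal R) (hI : I = Ideal.span (Set.range f))
    (a : R) (ℓ : ℕ) (ha : a ∈ I ^ ℓ) (ha' : a ∉ I ^ (ℓ + 1))
    (j : Fin m) (i : ℕ) (hi : 0 < i) :
    a * f j ^ i ∈ I ^ (ℓ + i) ∧ a * f j ^ i ∉ I ^ (ℓ + i + 1) :=
  mul_pow_mem_sub_of_regular_sequence_general f hreg I hI a ℓ ha ha' j i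
end

section
/- Let R be a commutative ring and let x_1, ..., x_n be a regular sequence in R. Then for any positive integers i_1, ..., i_n, the sequence x_1^{i_1}, ..., x_n^{i_n} is again a regular sequence in R. -/
section Aux

variable {R : Type*} [CommRing R]

/-- `WRF y I`: the sequence `y` is weakly regular on `R/I`. -/
def WRF : ∀ {n : ℕ}, (Fin n → R) → Ideal R → Prop
  | 0, _, _ => True
  | _ + 1, y, I =>
      (∀ m : R, m * y 0 ∈ I → m ∈ I) ∧
      WRF (fun j => y j.succ) (I ⊔ Ideal.span {y 0})

lemma WRF_cons {n : ℕ} (c : R) (ys : Fin n → R) (I : Ideal R) :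
    WRF (Fin.cons c ys) I ↔
      (∀ m : R, m * c ∈ I → m ∈ I) ∧ WRF ys (I ⊔ Ideal.span {c}) := by
  have h1 : (fun j : Fin n => (Fin.cons c ys : Fin (n + 1) → R) j.succ) = ys := by
    funext j; simp
  simp only [WRF, Fin.cons_zero, h1]

/-- The key lemma (a quotient-module diagram chase, phrased with ideals):
if `b` is suitably related to ideals `A ≤ ?`, `B`, `C`, weak regularity on
`R/A` and `R/C` implies weak regularity on `R/B`. -/
lemma mulWR : ∀ {n : ℕ} (rs : Fin n → R) (b : R) (A B C : Ideal R),
    B ≤ C →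
    (∀ z : R, z * b ∈ B → z ∈ A) →
    (∀ z ∈ A, b * z ∈ B) →
    C ≤ B ⊔ Ideal.span {b} →
    b ∈ C →
    WRF rs A → WRF rs C → WRF rs B
  | 0, _, _, _, _, _, _, _, _, _, _, _, _ => trivial
  | n + 1, rs, b, A, B, C, h1, h2, h3, h4, h5, hA, hC => by
    obtain ⟨hA1, hA2⟩ := hA
    obtain ⟨hC1, hC2⟩ := hC
    set r := rs 0 with hr
    constructor
    · -- head: r is a nonzerodivisor mod B
      intro m hm
      have hmC : m ∈ C := hC1 m (h1 hm)
      have hmBC := h4 hmC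
      rw [Submodule.mem_sup] at hmBC
      obtain ⟨w, hw, z, hz, hwz⟩ := hmBC
      rw [Ideal.mem_span_singleton] at hz
      obtain ⟨t, ht⟩ := hz
      have hbtB : b * (t * r) ∈ B := by
        have : b * (t * r) = m * r - w * r := by rw [← hwz, ht]; ring
        rw [this]
        exact Submodule.sub_mem _ hm (Ideal.mul_mem_right _ _ hw)
      have htA : t ∈ A := hA1 t (h2 _ (by rwa [mul_comm (t * r) b]))
      have : b * t ∈ B := h3 t htA
      rw [← hwz, ht]
      exact Submodule.add_mem _ hw this
    · -- tail
      refine mulWR (fun j => rs j.succ) b (A ⊔ Ideal.span {r}) (B ⊔ Ideal.span {r})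
        (C ⊔ Ideal.span {r}) (sup_le_sup_right h1 _) ?_ ?_ ?_
        (Submodule.mem_sup_left h5) hA2 hC2
      · -- injectivity passes to the quotient by r
        intro z hz
        rw [Submodule.mem_sup] at hz
        obtain ⟨β, hβ, w, hw, hβw⟩ := hz
        rw [Ideal.mem_span_singleton] at hw
        obtain ⟨t, ht⟩ := hw
        have htrC : t * r ∈ C := by
          have : t * r = z * b - β := by rw [← hβw, ht]; ring
          rw [this]
          exact Submodule.sub_mem _ (Ideal.mul_mem_left _ _ h5) (h1 hβ)
        have htC : t ∈ C := hC1 t htrC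
        have := h4 htC
        rw [Submodule.mem_sup] at this
        obtain ⟨w', hw', u, hu, h'⟩ := this
        rw [Ideal.mem_span_singleton] at hu
        obtain ⟨v, hv⟩ := hu
        have key : (z - r * v) * b ∈ B := by
          have : (z - r * v) * b = β + r * w' := by
            have e1 : z * b = β + r * t := by rw [← hβw, ht]
            have ht' : t = w' + b * v := by rw [← h', hv]
            rw [sub_mul, e1, ht']; ring
          rw [this]
          exact Submodule.add_mem _ hβ (Ideal.mul_mem_left _ _ hw')
        have : z - r * v ∈ A := h2 _ key
        have : z = (z - r * v) + r * v := by ring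
        rw [this]
        exact Submodule.add_mem _ (Submodule.mem_sup_left ‹z - r * v ∈ A›)
          (Submodule.mem_sup_right (by rw [Ideal.mem_span_singleton]; exact ⟨v, rfl⟩))
      · -- h3 passes to the quotient
        intro z hz
        rw [Submodule.mem_sup] at hz
        obtain ⟨α, hα, w, hw, h'⟩ := hz
        rw [Ideal.mem_span_singleton] at hw
        obtain ⟨t, ht⟩ := hw
        have : b * z = b * α + r * (b * t) := by rw [← h', ht]; ring
        rw [this]
        exact Submodule.add_mem _ (Submodule.mem_sup_left (h3 α hα))
          (Submodule.mem_sup_right (by rw [Ideal.mem_span_singleton]; exact ⟨b * t, rfl⟩))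
      · -- h4 passes to the quotient
        refine sup_le (le_trans h4 ?_) ?_
        · exact sup_le_sup_right le_sup_left _
        · exact le_trans (le_sup_right : Ideal.span {r} ≤ B ⊔ Ideal.span {r}) le_sup_left

/-- Raising the head of a weakly regular sequence to a positive power. -/
lemma headPow {n : ℕ} (ys : Fin n → R) (a : R) (I : Ideal R) :
    ∀ e : ℕ, 0 < e → WRF (Fin.cons a ys) I → WRF (Fin.cons (a ^ e) ys) I := by
  intro e he h
  induction e with
  | zero => exact absurd he (lt_irrefl 0)
  | succ e ih =>
    rcases Nat.eq_zero_or_pos e with he0 | hepos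
    · subst he0; simpa using h
    have ihe := ih hepos
    rw [WRF_cons] at h ihe ⊢
    obtain ⟨hhd, htl⟩ := h
    obtain ⟨ehd, etl⟩ := ihe
    constructor
    · intro m hm
      have heq : m * a ^ e * a = m * a ^ (e + 1) := by ring
      exact ehd m (hhd (m * a ^ e) (by rw [heq]; exact hm))
    · refine mulWR ys a (I ⊔ Ideal.span {a ^ e}) (I ⊔ Ideal.span {a ^ (e + 1)})
        (I ⊔ Ideal.span {a}) ?_ ?_ ?_ ?_ ?_ etl htl
      · refine sup_le le_sup_left ?_
        rw [Ideal.span_singleton_le_iff_mem]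
        exact Submodule.mem_sup_right
          (by rw [Ideal.mem_span_singleton]; exact ⟨a ^ e, by ring⟩)
      · intro z hz
        rw [Submodule.mem_sup] at hz
        obtain ⟨c, hc, w, hw, h'⟩ := hz
        rw [Ideal.mem_span_singleton] at hw
        obtain ⟨t, ht⟩ := hw
        have : (z - a ^ e * t) * a ∈ I := by
          have : (z - a ^ e * t) * a = c := by
            have e2 : z * a = c + a ^ (e + 1) * t := by rw [← h', ht]
            rw [sub_mul, e2]; ring
          rw [this]; exact hc
        have := hhd _ this
        have hz' : z = (z - a ^ e * t) + a ^ e * t := by ring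
        rw [hz']
        exact Submodule.add_mem _ (Submodule.mem_sup_left this)
          (Submodule.mem_sup_right (by rw [Ideal.mem_span_singleton]; exact ⟨t, rfl⟩))
      · intro z hz
        rw [Submodule.mem_sup] at hz
        obtain ⟨c, hc, w, hw, h'⟩ := hz
        rw [Ideal.mem_span_singleton] at hw
        obtain ⟨t, ht⟩ := hw
        have : a * z = a * c + a ^ (e + 1) * t := by rw [← h', ht]; ring
        rw [this]
        exact Submodule.add_mem _ (Submodule.mem_sup_left (Ideal.mul_mem_left _ _ hc))
          (Submodule.mem_sup_right (by rw [Ideal.mem_span_singleton]; exact ⟨t, rfl⟩))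
      · refine sup_le ?_ le_sup_right
        exact le_trans (le_sup_left : I ≤ I ⊔ Ideal.span {a ^ (e + 1)}) le_sup_left
      · exact Submodule.mem_sup_right (Ideal.subset_span rfl)

/-- Powers of a weakly regular sequence are weakly regular. -/
lemma powWR : ∀ {n : ℕ} (y : Fin n → R) (i : Fin n → ℕ), (∀ k, 0 < i k) →
    ∀ I : Ideal R, WRF y I → WRF (fun l => y l ^ i l) I
  | 0, _, _, _, _, _ => trivial
  | n + 1, y, i, hi, I, h => by
    have hy : y = Fin.cons (y 0) (Fin.tail y) := (Fin.cons_self_tail y).symm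
    have h' : WRF (Fin.cons (y 0) (Fin.tail y)) I := by rw [← hy]; exact h
    have hp := headPow (Fin.tail y) (y 0) I (i 0) (hi 0) h'
    rw [WRF_cons] at hp
    have hrec := powWR (Fin.tail y) (fun j => i j.succ) (fun j => hi j.succ)
      (I ⊔ Ideal.span {y 0 ^ i 0}) hp.2
    have hgoal : (fun l => y l ^ i l) =
        Fin.cons (y 0 ^ i 0) (fun j => Fin.tail y j ^ i j.succ) := by
      funext l
      refine Fin.cases ?_ ?_ l
      · simp
      · intro j; simp [Fin.tail]
    rw [hgoal, WRF_cons]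
    exact ⟨hp.1, hrec⟩

lemma set_lt_succ {n : ℕ} (j : Fin n) :
    {l : Fin (n + 1) | l < j.succ} = insert 0 (Fin.succ '' {l : Fin n | l < j}) := by
  ext l
  refine Fin.cases ?_ ?_ l
  · simp [Fin.succ_pos]
  · intro l'
    simp only [Set.mem_setOf_eq, Set.mem_insert_iff, Set.mem_image, Fin.succ_lt_succ_iff]
    constructor
    · intro h; exact Or.inr ⟨l', h, rfl⟩
    · rintro (h | ⟨m, hm, hml⟩)
      · exact absurd h (Fin.succ_ne_zero l')
      · rwa [← Fin.succ_inj.mp hml]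

/-- `WRF` agrees with the elementary formulation. -/
lemma WRF_iff : ∀ {n : ℕ} (y : Fin n → R) (I : Ideal R),
    WRF y I ↔ ∀ (k : Fin n) (r : R),
      r * y k ∈ I ⊔ Ideal.span (y '' {l : Fin n | l < k}) →
      r ∈ I ⊔ Ideal.span (y '' {l : Fin n | l < k})
  | 0, y, I => by
    constructor
    · intro _ k; exact k.elim0
    · intro _; trivial
  | n + 1, y, I => by
    have key : ∀ j : Fin n,
        I ⊔ Ideal.span (y '' {l : Fin (n + 1) | l < j.succ}) =
        (I ⊔ Ideal.span {y 0}) ⊔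
          Ideal.span ((fun j' : Fin n => y j'.succ) '' {l : Fin n | l < j}) := by
      intro j
      rw [set_lt_succ j, Set.image_insert_eq, ← Set.image_comp, Ideal.span_insert,
        sup_assoc]
      rfl
    have zero_case : (y '' {l : Fin (n + 1) | l < 0}) = ∅ := by
      have : {l : Fin (n + 1) | l < 0} = ∅ := by
        ext l; simp [Fin.not_lt_zero]
      rw [this, Set.image_empty]
    constructor
    · rintro ⟨hhd, htl⟩ k r
      refine Fin.cases ?_ ?_ k
      · rw [zero_case, Ideal.span_empty, sup_bot_eq]
        exact hhd r
      · intro j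
        rw [key j]
        exact (WRF_iff (fun j' : Fin n => y j'.succ) (I ⊔ Ideal.span {y 0})).mp htl j r
    · intro h
      constructor
      · intro m hm
        have := h 0 m (by rwa [zero_case, Ideal.span_empty, sup_bot_eq])
        rwa [zero_case, Ideal.span_empty, sup_bot_eq] at this
      · refine (WRF_iff (fun j' : Fin n => y j'.succ) (I ⊔ Ideal.span {y 0})).mpr ?_
        intro j r hr
        have := h j.succ r (by rwa [key j])
        rwa [key j] at this

end Aux

/-- Powers of a regular sequence form a regular sequence. -/
theorem regular_sequence_pow
    {R : Type*} [CommRing R] {n : ℕ} (x : Fin n → R)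
    (hreg : ∀ k : Fin n, ∀ r : R,
      r * x k ∈ Ideal.span (x '' {l : Fin n | l < k}) →
      r ∈ Ideal.span (x '' {l : Fin n | l < k}))
    (hproper : Ideal.span (Set.range x) ≠ ⊤)
    (i : Fin n → ℕ) (hipos : ∀ k, 0 < i k) :
    (∀ k : Fin n, ∀ r : R,
      r * x k ^ i k ∈ Ideal.span ((fun l => x l ^ i l) '' {l : Fin n | l < k}) →
      r ∈ Ideal.span ((fun l => x l ^ i l) '' {l : Fin n | l < k})) ∧
    Ideal.span (Set.range fun l => x l ^ i l) ≠ ⊤ := by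
  constructor
  · have hwrf : WRF x (⊥ : Ideal R) := by
      rw [WRF_iff]
      simpa using hreg
    have := (WRF_iff (fun l => x l ^ i l) (⊥ : Ideal R)).mp (powWR x i hipos ⊥ hwrf)
    simpa using this
  · intro htop
    apply hproper
    have hle : Ideal.span (Set.range fun l => x l ^ i l) ≤ Ideal.span (Set.range x) := by
      rw [Ideal.span_le]
      rintro _ ⟨l, rfl⟩
      exact Ideal.pow_mem_of_mem _ (Ideal.subset_span (Set.mem_range_self l)) _ (hipos l)
    exact top_unique (htop ▸ hle)
end

section
/- Let R be a commutative ring and let f, g be a regular sequence in R. Then for all positive integers i and j, the intersection of principal ideals satisfies (f^i) ∩ (g^j) = (f^i g^j). -/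
/-- If `f, g` is a regular sequence in `R`, then `(f^i) ∩ (g^j) = (f^i * g^j)`. -/
theorem inf_span_pow_of_regular_pair
    {R : Type*} [CommRing R] (f g : R)
    (hf : ∀ r : R, r * f = 0 → r = 0)
    (hg : ∀ r : R, r * g ∈ Ideal.span {f} → r ∈ Ideal.span {f})
    (hproper : Ideal.span {f, g} ≠ ⊤)
    (i j : ℕ) (hi : 0 < i) (hj : 0 < j) :
    Ideal.span {f ^ i} ⊓ Ideal.span {g ^ j} = Ideal.span {f ^ i * g ^ j} := by
  -- cancellation by f
  have hcancel : ∀ x y : R, f * x = f * y → x = y := by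
    intro x y h
    have h0 : (x - y) * f = 0 := by linear_combination h
    have := hf _ h0
    exact sub_eq_zero.mp this
  -- g^j regular mod (f)
  have hgj : ∀ (n : ℕ) (r : R), r * g ^ n ∈ Ideal.span {f} → r ∈ Ideal.span {f} := by
    intro n
    induction n with
    | zero => intro r hr; simpa using hr
    | succ n ih =>
      intro r hr
      have : (r * g ^ n) * g ∈ Ideal.span {f} := by
        rw [mul_assoc, ← pow_succ]; exact hr
      exact ih r (hg _ this)
  -- g^j regular mod (f^i)  (as divisibility)
  have key : ∀ (n : ℕ) (r : R), f ^ n ∣ r * g ^ j → f ^ n ∣ r := by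
    intro n
    induction n with
    | zero => intro r _; simp
    | succ n ih =>
      intro r hr
      have hrf : f ∣ r := by
        have : r * g ^ j ∈ Ideal.span {f} := by
          rw [Ideal.mem_span_singleton]
          exact dvd_trans (dvd_pow_self f (Nat.succ_ne_zero n)) hr
        exact Ideal.mem_span_singleton.mp (hgj j r this)
      obtain ⟨c, rfl⟩ := hrf
      obtain ⟨d, hd⟩ := hr
      have : f * (c * g ^ j) = f * (f ^ n * d) := by
        rw [← mul_assoc]
        calc f * c * g ^ j = f ^ (n + 1) * d := hd
          _ = f * (f ^ n * d) := by ring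
      have hc : f ^ n ∣ c := ih c ⟨d, hcancel _ _ this⟩
      obtain ⟨e, rfl⟩ := hc
      exact ⟨e, by ring⟩
  apply le_antisymm
  · intro x hx
    obtain ⟨hx1, hx2⟩ := Submodule.mem_inf.mp hx
    rw [Ideal.mem_span_singleton] at hx1 hx2
    obtain ⟨b, rfl⟩ := hx2
    have hb : f ^ i ∣ b := key i b (by rw [mul_comm (g ^ j) b] at hx1; exact hx1)
    obtain ⟨c, rfl⟩ := hb
    rw [Ideal.mem_span_singleton]
    exact ⟨c, by ring⟩
  · rw [le_inf_iff]
    constructor <;> rw [Ideal.span_singleton_le_span_singleton]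
    · exact ⟨g ^ j, rfl⟩
    · exact ⟨f ^ i, mul_comm _ _⟩
end

section
/- Let R be a Noetherian local ring, let f, h ∈ R, let m be a positive integer, and suppose f^m, h is a regular sequence generating the proper ideal I = (f^m, h). For a nonzero x ∈ R with x ∉ ∩_{n≥0} I^n, define ord_I(x) to be the largest nonnegative integer n with x ∈ I^n. Then: (a) for every positive integer i, ord_I(f^i) = ⌊i/m⌋; and (b) for every positive integer i and every such x, one has ⌊i/m⌋ + ord_I(x) ≤ ord_I(f^i x) ≤ ⌊i/m⌋ + ord_I(x) + 1. -/
section aux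
variable {R : Type*} [CommRing R]

lemma pow_decomp (u v : R) (I : Ideal R) (hI : I = Ideal.span {u, v}) :
    ∀ n : ℕ, I ^ (n + 1) ≤ Ideal.span {u} * I ^ n ⊔ Ideal.span {v ^ (n + 1)} := by
  intro n
  induction n with
  | zero =>
      rw [hI, Ideal.span_insert, zero_add, pow_one, pow_zero, mul_one, pow_one]
  | succ n ih =>
      have e : I ^ (n + 2) = I ^ (n + 1) * I := by ring
      rw [e]
      calc I ^ (n + 1) * I
          ≤ (Ideal.span {u} * I ^ n ⊔ Ideal.span {v ^ (n + 1)}) * I :=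
            Ideal.mul_mono_left ih
        _ = Ideal.span {u} * I ^ n * I ⊔ Ideal.span {v ^ (n + 1)} * I := by
            rw [Ideal.sup_mul]
        _ ≤ Ideal.span {u} * I ^ (n + 1) ⊔ Ideal.span {v ^ (n + 2)} := by
            apply sup_le
            · apply le_sup_of_le_left
              rw [mul_assoc, ← pow_succ]
            · rw [hI, Ideal.span_insert, Ideal.mul_sup,
                Ideal.span_singleton_mul_span_singleton,
                Ideal.span_singleton_mul_span_singleton]
              apply sup_le
              · apply le_sup_of_le_left
                rw [Ideal.span_singleton_le_iff_mem]
                have : v ^ (n + 1) * u = u * v ^ (n + 1) := by ring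
                rw [this]
                exact Ideal.mul_mem_mul (Ideal.mem_span_singleton_self u)
                  (Ideal.pow_mem_pow (Submodule.mem_sup_right (Ideal.mem_span_singleton_self v)) _)
              · apply le_sup_of_le_right
                rw [← pow_succ]

lemma key_step (u v : R) (I : Ideal R) (hI : I = Ideal.span {u, v})
    (hu : ∀ r : R, r * u = 0 → r = 0)
    (hv : ∀ r : R, r * v ∈ Ideal.span {u} → r ∈ Ideal.span {u}) :
    ∀ n : ℕ, ∀ y : R, u * y ∈ I ^ (n + 1) → y ∈ I ^ n := by
  intro n
  induction n with
  | zero => intro y _; simp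
  | succ n ih =>
      intro y hy
      obtain ⟨a, ha, b, hb, hab⟩ := Submodule.mem_sup.mp (pow_decomp u v I hI (n + 1) hy)
      rw [Ideal.mem_span_singleton_mul] at ha
      obtain ⟨z, hz, hz2⟩ := ha
      obtain ⟨c, hc⟩ := Ideal.mem_span_singleton'.mp hb
      have h1 : (c * v ^ (n + 1)) * v ∈ Ideal.span {u} := by
        have e : (c * v ^ (n + 1)) * v = u * y - u * z := by
          rw [← hab, ← hz2, ← hc]; ring
        rw [e]
        exact Ideal.sub_mem _ (Ideal.mem_span_singleton'.mpr ⟨y, by ring⟩)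
          (Ideal.mem_span_singleton'.mpr ⟨z, by ring⟩)
      obtain ⟨d, hd⟩ := Ideal.mem_span_singleton'.mp (hv _ h1)
      have hyz : y = z + d * v := by
        have h0 : (y - z - d * v) * u = 0 := by
          have e2 : u * y = u * z + c * v ^ (n + 1) * v := by
            rw [← hab, ← hz2, ← hc]; ring
          have : (y - z - d * v) * u = u * y - u * z - (c * v ^ (n + 1)) * v := by
            rw [← hd]; ring
          rw [this, e2]; ring
        have := hu _ h0
        linear_combination this
      have hvI : v ∈ I := by rw [hI]; exact Ideal.subset_span (by simp)
      have hd' : d ∈ I ^ n := by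
        apply ih
        have e3 : u * d = c * v ^ (n + 1) := by rw [← hd]; ring
        rw [e3]
        exact Ideal.mul_mem_left _ _ (Ideal.pow_mem_pow hvI _)
      rw [hyz]
      exact Ideal.add_mem _ hz (by rw [pow_succ]; exact Ideal.mul_mem_mul hd' hvI)

lemma key_pow (u v : R) (I : Ideal R) (hI : I = Ideal.span {u, v})
    (hu : ∀ r : R, r * u = 0 → r = 0)
    (hv : ∀ r : R, r * v ∈ Ideal.span {u} → r ∈ Ideal.span {u}) :
    ∀ k n : ℕ, ∀ y : R, u ^ k * y ∈ I ^ (n + k) → y ∈ I ^ n := by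
  intro k
  induction k with
  | zero => intro n y hy; simpa using hy
  | succ k ih =>
      intro n y hy
      have : u ^ k * (u * y) ∈ I ^ ((n + 1) + k) := by
        have e : u ^ k * (u * y) = u ^ (k + 1) * y := by ring
        have e2 : (n + 1) + k = n + (k + 1) := by ring
        rw [e, e2]; exact hy
      exact key_step u v I hI hu hv n y (ih (n + 1) (u * y) this)

end aux

/-- Lemma 2.19 (algebraic form): orders of vanishing with respect to the ideal
`I = (f^m, h)` generated by a regular sequence in a Noetherian local ring.
Membership `x ∈ I^ℓ \ I^(ℓ+1)` expresses `ord_I x = ℓ`. -/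
theorem ord_along_regular_chain
    {R : Type*} [CommRing R] [IsNoetherianRing R] [IsLocalRing R]
    (f h : R) (m : ℕ) (hm : 0 < m)
    (hf : ∀ r : R, r * f ^ m = 0 → r = 0)
    (hh : ∀ r : R, r * h ∈ Ideal.span {f ^ m} → r ∈ Ideal.span {f ^ m})
    (I : Ideal R) (hI : I = Ideal.span {f ^ m, h}) (hproper : I ≠ ⊤) :
    (∀ i : ℕ, 0 < i → f ^ i ∈ I ^ (i / m) ∧ f ^ i ∉ I ^ (i / m + 1)) ∧
    (∀ i : ℕ, 0 < i → ∀ x : R, x ≠ 0 → ∀ ℓ : ℕ, x ∈ I ^ ℓ → x ∉ I ^ (ℓ + 1) →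
      f ^ i * x ∈ I ^ (i / m + ℓ) ∧ f ^ i * x ∉ I ^ (i / m + ℓ + 2)) := by
  set u := f ^ m with hu_def
  -- f^k is a nonzerodivisor for the purposes we need
  have hfk : ∀ k : ℕ, k ≤ m → ∀ r : R, r * f ^ k = 0 → r = 0 := by
    intro k hk r hr
    apply hf
    have : r * f ^ m = (r * f ^ k) * f ^ (m - k) := by
      rw [mul_assoc, ← pow_add, Nat.add_sub_cancel' hk]
    rw [this, hr, zero_mul]
  have huI : u ∈ I := by rw [hI]; exact Ideal.subset_span (by simp)
  have hhI : h ∈ I := by rw [hI]; exact Ideal.subset_span (by simp)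
  -- maximal ideal facts
  have hmax := IsLocalRing.maximalIdeal.isMaximal R
  have hIle : I ≤ IsLocalRing.maximalIdeal R :=
    IsLocalRing.le_maximalIdeal hproper
  have hfmem : f ∈ IsLocalRing.maximalIdeal R := by
    have hprime : (IsLocalRing.maximalIdeal R).IsPrime := hmax.isPrime
    have : f ^ m ∈ IsLocalRing.maximalIdeal R := hIle huI
    exact hprime.mem_of_pow_mem m this
  -- f^r ∉ I for r < m
  have hfr : ∀ r : ℕ, r < m → f ^ r ∉ I := by
    intro r hr hmem
    rcases Nat.eq_zero_or_pos r with rfl | hrpos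
    · simp only [pow_zero] at hmem
      exact hproper ((Ideal.eq_top_iff_one I).mpr hmem)
    · rw [hI, Ideal.span_insert, Submodule.mem_sup] at hmem
      obtain ⟨a', ha', b', hb', hab⟩ := hmem
      obtain ⟨a, ha⟩ := Ideal.mem_span_singleton'.mp ha'
      obtain ⟨b, hb⟩ := Ideal.mem_span_singleton'.mp hb'
      -- f^r = a * f^m + b * h
      have h1 : (b * f ^ (m - r)) * h ∈ Ideal.span {f ^ m} := by
        refine Ideal.mem_span_singleton'.mpr ⟨1 - a * f ^ (m - r), ?_⟩
        have e : f ^ (m - r) * f ^ r = f ^ m := by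
          rw [← pow_add, Nat.sub_add_cancel hr.le]
        calc (1 - a * f ^ (m - r)) * f ^ m
            = (1 - a * f ^ (m - r)) * (f ^ (m - r) * f ^ r) := by rw [e]
          _ = f ^ (m - r) * (f ^ r - a * (f ^ (m-r) * f ^ r)) := by ring
          _ = f ^ (m - r) * (f ^ r - a * f ^ m) := by rw [e]
          _ = f ^ (m - r) * (b * h) := by
              rw [show f ^ r - a * f ^ m = b * h by rw [← hab, ← ha, ← hb]; ring]
          _ = b * f ^ (m - r) * h := by ring
      obtain ⟨c, hc⟩ := Ideal.mem_span_singleton'.mp (hh _ h1)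
      -- c * f^m = b * f^(m-r), so b = c * f^r
      have hbc : b = c * f ^ r := by
        have h0 : (b - c * f ^ r) * f ^ (m - r) = 0 := by
          have e : f ^ r * f ^ (m - r) = f ^ m := by
            rw [← pow_add, Nat.add_sub_cancel' hr.le]
          calc (b - c * f ^ r) * f ^ (m - r)
              = b * f ^ (m - r) - c * (f ^ r * f ^ (m - r)) := by ring
            _ = b * f ^ (m - r) - c * f ^ m := by rw [e]
            _ = 0 := by rw [hc]; ring
        have := hfk (m - r) (Nat.sub_le _ _) _ h0
        linear_combination this
      -- f^r * (1 - c*h - a*f^(m-r)) = 0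
      have h2 : (1 - c * h - a * f ^ (m - r)) * f ^ r = 0 := by
        have e : f ^ (m - r) * f ^ r = f ^ m := by
          rw [← pow_add, Nat.sub_add_cancel hr.le]
        calc (1 - c * h - a * f ^ (m - r)) * f ^ r
            = f ^ r - c * f ^ r * h - a * (f ^ (m - r) * f ^ r) := by ring
          _ = f ^ r - c * f ^ r * h - a * f ^ m := by rw [e]
          _ = 0 := by rw [← hbc, ← hab, ← ha, ← hb]; ring
      have h3 := hfk r hr.le _ h2
      have h4 : (1 : R) = c * h + a * f ^ (m - r) := by linear_combination h3
      have : (1 : R) ∈ IsLocalRing.maximalIdeal R := by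
        rw [h4]
        exact Ideal.add_mem _ (Ideal.mul_mem_left _ _ (hIle hhI))
          (Ideal.mul_mem_left _ _ (Ideal.pow_mem_of_mem _ hfmem _ (by omega)))
      exact hmax.ne_top ((Ideal.eq_top_iff_one _).mpr this)
  -- abbreviations
  have hk := key_step u h I (by rw [hI]) hf hh
  have hkp := key_pow u h I (by rw [hI]) hf hh
  have hsplit : ∀ i : ℕ, f ^ i = u ^ (i / m) * f ^ (i % m) := by
    intro i
    rw [hu_def, ← pow_mul, ← pow_add]
    congr 1
    exact (Nat.div_add_mod i m).symm
  constructor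
  · intro i _
    constructor
    · rw [hsplit i]
      exact Ideal.mul_mem_right _ _ (Ideal.pow_mem_pow huI _)
    · intro hmem
      rw [hsplit i] at hmem
      have : u ^ (i / m) * f ^ (i % m) ∈ I ^ (1 + i / m) := by
        rwa [show 1 + i / m = i / m + 1 by ring]
      exact hfr (i % m) (Nat.mod_lt _ hm) (by simpa using hkp (i / m) 1 _ this)
  · intro i _ x _ ℓ hxℓ hxℓ1
    constructor
    · rw [hsplit i]
      have : u ^ (i / m) * x ∈ I ^ (i / m + ℓ) := by
        rw [pow_add]
        exact Ideal.mul_mem_mul (Ideal.pow_mem_pow huI _) hxℓ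
      have e : u ^ (i / m) * f ^ (i % m) * x = f ^ (i % m) * (u ^ (i / m) * x) := by ring
      rw [e]
      exact Ideal.mul_mem_left _ _ this
    · intro hmem
      rw [hsplit i] at hmem
      have h5 : u ^ (i / m) * (f ^ (i % m) * x) ∈ I ^ ((ℓ + 2) + i / m) := by
        rw [show (ℓ + 2) + i / m = i / m + ℓ + 2 by ring, ← mul_assoc]
        exact hmem
      have h6 : f ^ (i % m) * x ∈ I ^ (ℓ + 2) := hkp (i / m) (ℓ + 2) _ h5
      have h7 : u * x ∈ I ^ (ℓ + 2) := by
        have e : f ^ (m - i % m) * (f ^ (i % m) * x) = u * x := by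
          rw [hu_def, ← mul_assoc, ← pow_add,
            Nat.sub_add_cancel (Nat.mod_lt i hm).le]
        rw [← e]
        exact Ideal.mul_mem_left _ _ h6
      exact hxℓ1 (hk (ℓ + 1) x h7)
end

section
/- Let V be a finite-dimensional vector space of dimension d over a field K. Let V = W_1 ⊇ W_2 ⊇ ... ⊇ W_h and V = W_1* ⊇ W_2* ⊇ ... ⊇ W_{h*}* be two descending chains of subspaces of V. Then there exists a basis v_1, ..., v_d of V such that for every j, the set {v_1,...,v_d} ∩ W_j contains a basis of W_j, and for every j, the set {v_1,...,v_d} ∩ W_j* contains a basis of W_j*. -/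
open Module

theorem filtration_aux
    {K V : Type*} [Field K] [AddCommGroup V] [Module K V] [FiniteDimensional K V]
    (h h' : ℕ) (A B : ℕ → Submodule K V)
    (hA : ∀ i, A (i+1) ≤ A i) (hB : ∀ j, B (j+1) ≤ B j)
    (hA0 : A 0 = ⊤) (hB0 : B 0 = ⊤) (hAh : A h = ⊥) (hBh : B h' = ⊥) :
    ∃ bas : Basis (Fin (finrank K V)) K V,
      ∀ a b : ℕ, Submodule.span K (Set.range ⇑bas ∩ ((A a ⊓ B b : Submodule K V) : Set V))
        = A a ⊓ B b := by
  classical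
  have hAmono : Antitone A := antitone_nat_of_succ_le hA
  have hBmono : Antitone B := antitone_nat_of_succ_le hB
  set D : ℕ → ℕ → Submodule K V := fun i j => A i ⊓ B j with hDdef
  have hD1 : ∀ i j, D (i+1) j ≤ D i j := fun i j => inf_le_inf_right _ (hA i)
  have hD2 : ∀ i j, D i (j+1) ≤ D i j := fun i j => inf_le_inf_left _ (hB j)
  set E : ℕ → ℕ → Submodule K V := fun i j => D (i+1) j ⊔ D i (j+1) with hEdef
  have hED : ∀ i j, E i j ≤ D i j := fun i j => sup_le (hD1 i j) (hD2 i j)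
  -- choose complements
  have hex : ∀ i j : ℕ, ∃ q : Submodule K ↥(D i j),
      IsCompl ((E i j).comap (D i j).subtype) q :=
    fun i j => Submodule.exists_isCompl _
  choose Cin hCin using hex
  set C : ℕ → ℕ → Submodule K V := fun i j => (Cin i j).map (D i j).subtype with hCdef
  have hCD : ∀ i j, C i j ≤ D i j := fun i j => Submodule.map_subtype_le _ _
  have hsup : ∀ i j, C i j ⊔ E i j = D i j := by
    intro i j
    have h1 : ((E i j).comap (D i j).subtype) ⊔ Cin i j = ⊤ := (hCin i j).sup_eq_top
    have h2 := congrArg (Submodule.map (D i j).subtype) h1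
    rwa [Submodule.map_sup, Submodule.map_comap_subtype, inf_of_le_right (hED i j),
      Submodule.map_subtype_top, sup_comm] at h2
  -- rank relations
  have hrk1 : ∀ i j, finrank K (C i j) + finrank K (E i j) = finrank K (D i j) := by
    intro i j
    have e1 : finrank K (C i j) = finrank K (Cin i j) :=
      (LinearEquiv.finrank_eq
        (Submodule.equivMapOfInjective _ (Submodule.injective_subtype _) (Cin i j))).symm
    have e2 : finrank K ((E i j).comap (D i j).subtype) = finrank K (E i j) :=
      LinearEquiv.finrank_eq (Submodule.comapSubtypeEquivOfLe (hED i j))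
    have := Submodule.finrank_add_eq_of_isCompl (hCin i j)
    rw [e2] at this
    rw [e1, add_comm, this]
  have hD11 : ∀ i j, D (i+1) j ⊓ D i (j+1) = D (i+1) (j+1) := by
    intro i j
    apply le_antisymm
    · exact le_inf (inf_le_left.trans inf_le_left) (inf_le_right.trans inf_le_right)
    · exact le_inf (le_inf inf_le_left (inf_le_right.trans (hB j)))
        (le_inf (inf_le_left.trans (hA i)) inf_le_right)
  have hrk2 : ∀ i j, finrank K (E i j) + finrank K (D (i+1) (j+1))
      = finrank K (D (i+1) j) + finrank K (D i (j+1)) := by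
    intro i j
    have := Submodule.finrank_sup_add_finrank_inf_eq (D (i+1) j) (D i (j+1))
    rwa [hD11 i j] at this
  -- vanishing
  have hAbot : ∀ i, h ≤ i → A i = ⊥ := fun i hi => le_bot_iff.mp (hAh ▸ hAmono hi)
  have hBbot : ∀ j, h' ≤ j → B j = ⊥ := fun j hj => le_bot_iff.mp (hBh ▸ hBmono hj)
  have hDbotA : ∀ i j, h ≤ i → D i j = ⊥ := by
    intro i j hi; simp [hDdef, hAbot i hi]
  have hDbotB : ∀ i j, h' ≤ j → D i j = ⊥ := by
    intro i j hj; simp [hDdef, hBbot j hj]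
  -- the sum of dimensions
  have hsum : ∑ i ∈ Finset.range h, ∑ j ∈ Finset.range h',
      (finrank K (C i j) : ℤ) = (finrank K V : ℤ) := by
    have hc : ∀ i j, (finrank K (C i j) : ℤ)
        = ((finrank K (D i j) : ℤ) - finrank K (D (i+1) j))
          - ((finrank K (D i (j+1)) : ℤ) - finrank K (D (i+1) (j+1))) := by
      intro i j
      have h1 := hrk1 i j
      have h2 := hrk2 i j
      zify at h1 h2
      omega
    calc ∑ i ∈ Finset.range h, ∑ j ∈ Finset.range h', (finrank K (C i j) : ℤ)
        = ∑ i ∈ Finset.range h,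
            (((finrank K (D i 0) : ℤ) - finrank K (D (i+1) 0))
              - ((finrank K (D i h') : ℤ) - finrank K (D (i+1) h'))) := by
          refine Finset.sum_congr rfl fun i _ => ?_
          rw [Finset.sum_congr rfl fun j _ => hc i j, Finset.sum_range_sub'
            (fun j => (finrank K (D i j) : ℤ) - finrank K (D (i+1) j))]
      _ = ∑ i ∈ Finset.range h,
            (((finrank K (D i 0) : ℤ)) - ((finrank K (D (i+1) 0) : ℤ))) := by
          refine Finset.sum_congr rfl fun i _ => ?_
          rw [hDbotB i h' le_rfl, hDbotB (i+1) h' le_rfl]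
          simp
      _ = (finrank K (D 0 0) : ℤ) - (finrank K (D h 0) : ℤ) :=
          Finset.sum_range_sub' (fun i => (finrank K (D i 0) : ℤ)) h
      _ = (finrank K V : ℤ) := by
          have h00 : D 0 0 = ⊤ := by simp [hDdef, hA0, hB0]
          rw [hDbotA h 0 le_rfl, h00]
          simp [finrank_top]
  -- the family
  let ι : Type _ := (p : Fin h × Fin h') × Fin (finrank K (C p.1.val p.2.val))
  let f : ι → V := fun x => ((finBasis K (C x.1.1.val x.1.2.val)) x.2 : V)
  have hcard : Fintype.card ι = finrank K V := by
    have : Fintype.card ι = ∑ p : Fin h × Fin h', finrank K (C p.1.val p.2.val) := by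
      simp [ι, Fintype.card_sigma]
    rw [this]
    have : (∑ p : Fin h × Fin h', finrank K (C p.1.val p.2.val) : ℤ) = (finrank K V : ℤ) := by
      rw [Fintype.sum_prod_type]
      push_cast
      rw [← hsum]
      rw [Fin.sum_univ_eq_sum_range (fun i => ∑ j : Fin h', (finrank K (C i j.val) : ℤ))]
      exact Finset.sum_congr rfl fun i _ =>
        Fin.sum_univ_eq_sum_range (fun j => (finrank K (C i j) : ℤ)) h'
    exact_mod_cast this
  -- spanning of C i j by vectors of f
  have hCspan : ∀ i j, (hi : i < h) → (hj : j < h') →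
      C i j = Submodule.span K (Set.range fun k : Fin (finrank K (C i j)) =>
        f ⟨(⟨i, hi⟩, ⟨j, hj⟩), k⟩) := by
    intro i j hi hj
    have h1 : Set.range (fun k : Fin (finrank K (C i j)) =>
        ((finBasis K (C i j)) k : V))
        = ⇑(C i j).subtype '' Set.range (⇑(finBasis K (C i j))) := by
      rw [← Set.range_comp]; rfl
    rw [h1, ← Submodule.map_span, Basis.span_eq, Submodule.map_subtype_top]
  -- key lemma: C i j lands in span of (range f ∩ D a b) for a ≤ i, b ≤ j
  have hkey2 : ∀ a b i j, a ≤ i → b ≤ j →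
      C i j ≤ Submodule.span K (Set.range f ∩ ((D a b : Submodule K V) : Set V)) := by
    intro a b i j hai hbj
    by_cases hi : i < h
    · by_cases hj : j < h'
      · rw [hCspan i j hi hj]
        apply Submodule.span_mono
        rintro _ ⟨k, rfl⟩
        constructor
        · exact ⟨⟨(⟨i, hi⟩, ⟨j, hj⟩), k⟩, rfl⟩
        · have hmem : (f ⟨(⟨i, hi⟩, ⟨j, hj⟩), k⟩ : V) ∈ C i j := ((finBasis K (C i j)) k).2
          have : C i j ≤ D a b :=
            (hCD i j).trans (inf_le_inf (hAmono hai) (hBmono hbj))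
          exact this hmem
      · have : C i j = ⊥ := le_bot_iff.mp ((hCD i j).trans_eq (hDbotB i j (not_lt.mp hj)))
        simp [this]
    · have : C i j = ⊥ := le_bot_iff.mp ((hCD i j).trans_eq (hDbotA i j (not_lt.mp hi)))
      simp [this]
  -- key induction: D a b ≤ span of vectors with indices ≥ (a,b)
  have hkey : ∀ n a b, h - a + (h' - b) ≤ n →
      D a b ≤ Submodule.span K (Set.range f ∩ ((D a b : Submodule K V) : Set V)) := by
    intro n
    induction n with
    | zero =>
        intro a b hn
        have ha : h ≤ a := by omega
        rw [hDbotA a b ha]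
        exact bot_le
    | succ n ih =>
        intro a b hn
        by_cases ha : h ≤ a
        · rw [hDbotA a b ha]; exact bot_le
        · by_cases hb : h' ≤ b
          · rw [hDbotB a b hb]; exact bot_le
          · have h1 : D (a+1) b ≤ Submodule.span K
                (Set.range f ∩ ((D a b : Submodule K V) : Set V)) := by
              refine le_trans (ih (a+1) b (by omega)) (Submodule.span_mono ?_)
              exact Set.inter_subset_inter_right _ (hD1 a b)
            have h2 : D a (b+1) ≤ Submodule.span K
                (Set.range f ∩ ((D a b : Submodule K V) : Set V)) := by
              refine le_trans (ih a (b+1) (by omega)) (Submodule.span_mono ?_)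
              exact Set.inter_subset_inter_right _ (hD2 a b)
            have h3 : C a b ≤ Submodule.span K
                (Set.range f ∩ ((D a b : Submodule K V) : Set V)) :=
              hkey2 a b a b le_rfl le_rfl
            exact le_trans (hsup a b).symm.le (sup_le h3 (sup_le h1 h2))
  have hkey' : ∀ a b, D a b ≤ Submodule.span K
      (Set.range f ∩ ((D a b : Submodule K V) : Set V)) :=
    fun a b => hkey (h + h') a b (by omega)
  -- conclude
  have htop : ⊤ ≤ Submodule.span K (Set.range f) := by
    have h00 : D 0 0 = ⊤ := by simp [hDdef, hA0, hB0]
    calc (⊤ : Submodule K V) = D 0 0 := h00.symm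
      _ ≤ Submodule.span K (Set.range f ∩ ((D 0 0 : Submodule K V) : Set V)) := hkey' 0 0
      _ ≤ Submodule.span K (Set.range f) := Submodule.span_mono Set.inter_subset_left
  let bas0 : Basis ι K V := basisOfTopLeSpanOfCardEqFinrank f htop hcard
  let e : ι ≃ Fin (finrank K V) := Fintype.equivFinOfCardEq hcard
  refine ⟨bas0.reindex e, ?_⟩
  have hrange : Set.range ⇑(bas0.reindex e) = Set.range f := by
    rw [Basis.range_reindex]
    exact congrArg Set.range (coe_basisOfTopLeSpanOfCardEqFinrank f htop hcard)
  intro a b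
  rw [hrange]
  apply le_antisymm
  · exact Submodule.span_le.mpr Set.inter_subset_right
  · exact hkey' a b

/-- Filtration Lemma: there is a basis of `V` simultaneously adapted to two
descending chains of subspaces. -/
theorem filtration_lemma
    {K V : Type*} [Field K] [AddCommGroup V] [Module K V] [FiniteDimensional K V]
    {h h' : ℕ} (hh : 0 < h) (hh' : 0 < h')
    (W : Fin h → Submodule K V) (W' : Fin h' → Submodule K V)
    (hW : ∀ j k : Fin h, j ≤ k → W k ≤ W j)
    (hW' : ∀ j k : Fin h', j ≤ k → W' k ≤ W' j)
    (hW1 : W ⟨0, hh⟩ = ⊤) (hW1' : W' ⟨0, hh'⟩ = ⊤) :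
    ∃ b : Basis (Fin (finrank K V)) K V,
      (∀ j : Fin h, Submodule.span K (Set.range b ∩ (W j : Set V)) = W j) ∧
      (∀ j : Fin h', Submodule.span K (Set.range b ∩ (W' j : Set V)) = W' j) := by
  classical
  set A : ℕ → Submodule K V := fun i => if hi : i < h then W ⟨i, hi⟩ else ⊥ with hAdef
  set B : ℕ → Submodule K V := fun j => if hj : j < h' then W' ⟨j, hj⟩ else ⊥ with hBdef
  have hA : ∀ i, A (i+1) ≤ A i := by
    intro i
    by_cases hi : i + 1 < h
    · have hi' : i < h := by omega
      simp only [hAdef, dif_pos hi, dif_pos hi']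
      exact hW ⟨i, hi'⟩ ⟨i+1, hi⟩ (by simp [Fin.le_def])
    · simp only [hAdef, dif_neg hi]; exact bot_le
  have hB : ∀ j, B (j+1) ≤ B j := by
    intro j
    by_cases hj : j + 1 < h'
    · have hj' : j < h' := by omega
      simp only [hBdef, dif_pos hj, dif_pos hj']
      exact hW' ⟨j, hj'⟩ ⟨j+1, hj⟩ (by simp [Fin.le_def])
    · simp only [hBdef, dif_neg hj]; exact bot_le
  have hA0 : A 0 = ⊤ := by simp only [hAdef, dif_pos hh]; exact hW1
  have hB0 : B 0 = ⊤ := by simp only [hBdef, dif_pos hh']; exact hW1'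
  have hAh : A h = ⊥ := by simp [hAdef]
  have hBh : B h' = ⊥ := by simp [hBdef]
  obtain ⟨bas, hbas⟩ := filtration_aux h h' A B hA hB hA0 hB0 hAh hBh
  refine ⟨bas, fun j => ?_, fun j => ?_⟩
  · have hAB : A j.val ⊓ B 0 = W j := by
      simp only [hAdef, dif_pos j.isLt, hB0]
      simp
    have := hbas j.val 0
    rwa [hAB] at this
  · have hAB : A 0 ⊓ B j.val = W' j := by
      simp only [hBdef, dif_pos j.isLt, hA0]
      simp
    have := hbas 0 j.val
    rwa [hAB] at this
end

section
/- Let d_1 ≥ d_2 ≥ d_3 be positive integers such that d_1 + 1 < (9/5)·d_3. Then ( √((d_1+1)/(d_1+1−d_2)) − 1 ) · ( √((d_1+1)/(d_1+1−d_3)) − 1 ) > 1/4. -/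
lemma sqrt_aux (N d : ℝ) (hd : 0 < d) (hdN : d < N) (h : 5 * N < 9 * d) :
    Real.sqrt (N / (N - d)) - 1 > 1 / 2 := by
  have hpos : (0:ℝ) < N - d := by linarith
  have hr : (9:ℝ)/4 < N / (N - d) := by
    rw [lt_div_iff₀ hpos]; nlinarith
  have : (3:ℝ)/2 < Real.sqrt (N / (N - d)) := by
    rw [show (3:ℝ)/2 = Real.sqrt ((3/2)^2) by rw [Real.sqrt_sq]; norm_num]
    apply Real.sqrt_lt_sqrt (by positivity)
    nlinarith
  linarith

/-- The 'in particular' clause of Theorem 5.8. -/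
theorem unit_equation_degree_inequality
    (d₁ d₂ d₃ : ℕ) (h3 : 0 < d₃) (h32 : d₃ ≤ d₂) (h21 : d₂ ≤ d₁)
    (hdeg : (d₁ : ℝ) + 1 < (9 / 5) * d₃) :
    (Real.sqrt (((d₁ : ℝ) + 1) / ((d₁ : ℝ) + 1 - d₂)) - 1) *
      (Real.sqrt (((d₁ : ℝ) + 1) / ((d₁ : ℝ) + 1 - d₃)) - 1) > 1 / 4 := by
  have h3' : (0:ℝ) < d₃ := by exact_mod_cast h3
  have h32' : (d₃:ℝ) ≤ d₂ := by exact_mod_cast h32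
  have h21' : (d₂:ℝ) ≤ d₁ := by exact_mod_cast h21
  have A := sqrt_aux ((d₁:ℝ)+1) d₂ (by linarith) (by linarith) (by linarith)
  have B := sqrt_aux ((d₁:ℝ)+1) d₃ (by linarith) (by linarith) (by linarith)
  nlinarith
end

section
/- Let R be a commutative ring and let f_1, ..., f_m be a regular sequence generating the ideal I = (f_1,...,f_m). Then the associated graded ring G_I(R) = ⊕_{r ≥ 0} I^r/I^{r+1} is isomorphic, as a graded (R/I)-algebra, to the polynomial ring (R/I)[x_1, ..., x_m], where x_j corresponds to the image of f_j in I/I^2. -/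
/-!
Write `I_s` for the ideal generated by the `f i`, `i ∈ s`. Quasi-regularity of `f` on `s` holds
trivially for `s = ∅`, and passes from `s` to `insert k s` when `f k` is a nonzerodivisor modulo
`I_s`. Given a relation `p` of degree `r + 1`, write `p = X k * h + g` with `g` free of `X k`;
then `f k * h(f) = -g(f) ∈ I_s^{r+1}`. Quasi-regularity on `s` makes `f k` a nonzerodivisor
modulo every power `I_s^j`, so `h(f) ∈ I_s^{r+1}`, and by induction on the degree `h` has
coefficients in `I_{insert k s}`. Lifting `h(f)` to a polynomial `q` on `s`, `g + f k * q` is a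
relation on `s`, so `g` has coefficients in `I_{insert k s}` as well.
-/

open MvPolynomial

namespace MvPolynomial

section CommSemiring

variable {σ R : Type*} [CommSemiring R] {s : Set σ} {p : MvPolynomial σ R}

theorem mem_supported_iff_support_subset :
    p ∈ supported R s ↔ ∀ d ∈ p.support, ↑d.support ⊆ s := by
  simp only [mem_supported, Set.subset_def, Finset.mem_coe, mem_vars_iff_mem_support]
  exact ⟨fun h d hd i hi => h i ⟨d, hd, hi⟩, fun h i ⟨d, hd, hi⟩ => h d hd i hi⟩

theorem monomial_mem_supported {d : σ →₀ ℕ} (hd : ↑d.support ⊆ s) (a : R) :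
    monomial d a ∈ supported R s :=
  mem_supported_iff_support_subset.2 fun e he => by
    rwa [Finset.mem_singleton.1 (support_monomial_subset he)]

theorem divMonomial_mem_supported_s14 (hp : p ∈ supported R s) (d : σ →₀ ℕ) :
    p.divMonomial d ∈ supported R s := by
  rw [mem_supported_iff_support_subset] at hp ⊢
  intro e he
  rw [mem_support_iff, coeff_divMonomial] at he
  exact subset_trans (Finset.coe_subset.2 (Finsupp.support_mono le_add_self))
    (hp _ (mem_support_iff.2 he))

theorem modMonomial_single_mem_supported {k : σ} (hp : p ∈ supported R (insert k s)) :
    p.modMonomial (Finsupp.single k 1) ∈ supported R s := by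
  rw [mem_supported_iff_support_subset] at hp ⊢
  intro e he
  by_cases hk : Finsupp.single k 1 ≤ e
  · simp [mem_support_iff, coeff_modMonomial_of_le _ hk] at he
  · rw [mem_support_iff, coeff_modMonomial_of_not_le _ hk] at he
    have hek : e k = 0 := by
      by_contra h
      exact hk (Finsupp.single_le_iff.2 (Nat.one_le_iff_ne_zero.2 h))
    intro i hi
    rcases hp e (mem_support_iff.2 he) hi with rfl | h
    · simp [hek] at hi
    · exact h

theorem IsHomogeneous.divMonomial_single {r : ℕ} (hp : p.IsHomogeneous (r + 1)) (k : σ) :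
    (p.divMonomial (Finsupp.single k 1)).IsHomogeneous r := by
  intro e he
  rw [coeff_divMonomial] at he
  have hw := hp he
  simp only [map_add, Finsupp.weight_single, Pi.one_apply, smul_eq_mul, mul_one] at hw
  omega

theorem IsHomogeneous.modMonomial {r : ℕ} (hp : p.IsHomogeneous r) (d : σ →₀ ℕ) :
    (p.modMonomial d).IsHomogeneous r := by
  intro e he
  by_cases h : d ≤ e
  · simp [coeff_modMonomial_of_le _ h] at he
  · exact hp (by rwa [coeff_modMonomial_of_not_le _ h] at he)

end CommSemiring

section CommRing

variable {σ R : Type*} [CommRing R] {f : σ → R} {s : Set σ} {r : ℕ}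

theorem _root_.Ideal.mem_span_image_pow_iff_exists_isHomogeneous {x : R} :
    x ∈ Ideal.span (f '' s) ^ r ↔
      ∃ p : MvPolynomial σ R, p.IsHomogeneous r ∧ p ∈ supported R s ∧ aeval f p = x := by
  rw [Set.image_eq_range, Ideal.mem_span_pow_iff_exists_isHomogeneous, supported_eq_range_rename]
  constructor
  · rintro ⟨p, hp, rfl⟩
    exact ⟨rename Subtype.val p, hp.rename_isHomogeneous, ⟨p, rfl⟩, aeval_rename _ _ _⟩
  · rintro ⟨_, hp, ⟨p, rfl⟩, rfl⟩
    exact ⟨p, (IsHomogeneous.rename_isHomogeneous_iff Subtype.val_injective).1 hp,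
      (aeval_rename _ _ _).symm⟩

theorem aeval_mem_span_image_pow {p : MvPolynomial σ R} (hp : p.IsHomogeneous r)
    (hs : p ∈ supported R s) : aeval f p ∈ Ideal.span (f '' s) ^ r :=
  Ideal.mem_span_image_pow_iff_exists_isHomogeneous.2 ⟨p, hp, hs, rfl⟩

theorem aeval_mem_span_image_pow_succ {p : MvPolynomial σ R} (hp : p.IsHomogeneous r)
    (hs : p ∈ supported R s) (hc : p ∈ (Ideal.span (f '' s)).map C) :
    aeval f p ∈ Ideal.span (f '' s) ^ (r + 1) := by
  rw [p.as_sum, map_sum, pow_succ']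
  refine Ideal.sum_mem _ fun d hd => ?_
  have hdr : (monomial d (1 : R)).IsHomogeneous r :=
    isWeightedHomogeneous_monomial _ _ _ (hp (mem_support_iff.1 hd))
  have hds : monomial d (1 : R) ∈ supported R s :=
    monomial_mem_supported (mem_supported_iff_support_subset.1 hs d hd) 1
  rw [← mul_one (coeff d p), ← C_mul_monomial, map_mul, aeval_C, Algebra.algebraMap_self_apply]
  exact Ideal.mul_mem_mul (mem_map_C_iff.1 hc d) (aeval_mem_span_image_pow hdr hds)

theorem exists_isHomogeneous_mem_map_C_of_mem_span_image_pow_succ {x : R}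
    (hx : x ∈ Ideal.span (f '' s) ^ (r + 1)) :
    ∃ p : MvPolynomial σ R, p.IsHomogeneous r ∧ p ∈ supported R s ∧
      p ∈ (Ideal.span (f '' s)).map C ∧ aeval f p = x := by
  rw [pow_succ] at hx
  refine Submodule.mul_induction_on hx (fun a ha b hb => ?_) fun x y hx hy => ?_
  · obtain ⟨p, hp, hps, rfl⟩ := Ideal.mem_span_image_pow_iff_exists_isHomogeneous.1 ha
    refine ⟨C b * p, by simpa using hp.C_mul b,
      Subalgebra.mul_mem _ (Subalgebra.algebraMap_mem _ b) hps,
      Ideal.mul_mem_right _ _ (Ideal.mem_map_of_mem _ hb), ?_⟩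
    rw [map_mul, aeval_C, mul_comm, Algebra.algebraMap_self_apply]
  · obtain ⟨p, hp, hps, hpc, rfl⟩ := hx
    obtain ⟨q, hq, hqs, hqc, rfl⟩ := hy
    exact ⟨p + q, hp.add hq, add_mem hps hqs, add_mem hpc hqc, map_add _ _ _⟩

end CommRing

end MvPolynomial

section QuasiRegular

variable {σ R : Type*} [CommRing R]

/-- Injectivity of `(R/I)[X_i : i ∈ s]_r → I^r/I^{r+1}`, `X_i ↦ f i`, for `I = (f i : i ∈ s)`,
where "coefficients in `I`" is membership in `I.map C`. -/
def IsQuasiRegularInDegree (f : σ → R) (s : Set σ) (r : ℕ) : Prop :=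
  ∀ p : MvPolynomial σ R, p.IsHomogeneous r → p ∈ supported R s →
    aeval f p ∈ Ideal.span (f '' s) ^ (r + 1) → p ∈ (Ideal.span (f '' s)).map C

variable {f : σ → R} {s : Set σ} {r : ℕ}

theorem isQuasiRegularInDegree_of_forall_aeval_eq_zero
    (h : ∀ p : MvPolynomial σ R, p.IsHomogeneous r → p ∈ supported R s → aeval f p = 0 →
      p ∈ (Ideal.span (f '' s)).map C) :
    IsQuasiRegularInDegree f s r := by
  intro p hp hps hpI
  obtain ⟨q, hq, hqs, hqc, hqp⟩ := exists_isHomogeneous_mem_map_C_of_mem_span_image_pow_succ hpI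
  have hpq := h (p - q) (hp.sub hq) (sub_mem hps hqs) (by rw [map_sub, hqp, sub_self])
  simpa using add_mem hpq hqc

theorem isQuasiRegularInDegree_of_forall_eq_C
    (h : ∀ p : MvPolynomial σ R, p.IsHomogeneous r → p ∈ supported R s → p = C (coeff 0 p)) :
    IsQuasiRegularInDegree f s r :=
  isQuasiRegularInDegree_of_forall_aeval_eq_zero fun p hp hps hp0 => by
    rw [h p hp hps, aeval_C, Algebra.algebraMap_self_apply] at hp0
    rw [h p hp hps, hp0, C_0]
    exact zero_mem _

theorem isQuasiRegularInDegree_zero (f : σ → R) (s : Set σ) : IsQuasiRegularInDegree f s 0 :=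
  isQuasiRegularInDegree_of_forall_eq_C fun _ hp _ =>
    totalDegree_eq_zero_iff_eq_C.1 ((totalDegree_zero_iff_isHomogeneous σ).2 hp)

theorem isQuasiRegularInDegree_empty (f : σ → R) (r : ℕ) : IsQuasiRegularInDegree f ∅ r :=
  isQuasiRegularInDegree_of_forall_eq_C fun p _ hps => by
    rw [supported_empty, Algebra.mem_bot] at hps
    obtain ⟨c, rfl⟩ := hps
    simp [algebraMap_eq]

theorem mem_span_image_pow_of_mul_mem (hs : ∀ r, IsQuasiRegularInDegree f s r) {a : R}
    (ha : ∀ x, x * a ∈ Ideal.span (f '' s) → x ∈ Ideal.span (f '' s)) {x : R} {j : ℕ}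
    (hx : a * x ∈ Ideal.span (f '' s) ^ j) : x ∈ Ideal.span (f '' s) ^ j := by
  induction j with
  | zero => simp
  | succ j ih =>
    obtain ⟨p, hp, hps, rfl⟩ := Ideal.mem_span_image_pow_iff_exists_isHomogeneous.1
      (ih (Ideal.pow_le_pow_right j.le_succ hx))
    have hap : C a * p ∈ (Ideal.span (f '' s)).map C :=
      hs j _ (by simpa using hp.C_mul a)
        (Subalgebra.mul_mem _ (Subalgebra.algebraMap_mem _ a) hps) (by rwa [map_mul, aeval_C])
    refine aeval_mem_span_image_pow_succ hp hps (mem_map_C_iff.2 fun d => ha _ ?_)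
    rw [mul_comm, ← coeff_C_mul]
    exact mem_map_C_iff.1 hap d

theorem isQuasiRegularInDegree_insert (hs : ∀ r, IsQuasiRegularInDegree f s r) {k : σ}
    (hk : ∀ x, x * f k ∈ Ideal.span (f '' s) → x ∈ Ideal.span (f '' s)) (r : ℕ) :
    IsQuasiRegularInDegree f (insert k s) r := by
  induction r with
  | zero => exact isQuasiRegularInDegree_zero f _
  | succ r ih =>
    refine isQuasiRegularInDegree_of_forall_aeval_eq_zero fun p hp hps hp0 => ?_
    set h := p.divMonomial (Finsupp.single k 1)
    set g := p.modMonomial (Finsupp.single k 1)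
    have hgs : g ∈ supported R s := modMonomial_single_mem_supported hps
    have hg : g.IsHomogeneous (r + 1) := hp.modMonomial _
    have hfh : f k * aeval f h = -aeval f g := by
      have hpX := congrArg (aeval f) (divMonomial_add_modMonomial_single p k)
      rw [map_add, map_mul, aeval_X, hp0] at hpX
      exact eq_neg_of_add_eq_zero_left hpX
    have hhI : aeval f h ∈ Ideal.span (f '' s) ^ (r + 1) :=
      mem_span_image_pow_of_mul_mem hs hk (hfh ▸ neg_mem (aeval_mem_span_image_pow hg hgs))
    have hle : Ideal.span (f '' s) ≤ Ideal.span (f '' insert k s) :=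
      Ideal.span_mono (Set.image_mono (Set.subset_insert k s))
    have hhC : h ∈ (Ideal.span (f '' insert k s)).map C :=
      ih h (hp.divMonomial_single k) (divMonomial_mem_supported_s14 hps _)
        (Ideal.pow_right_mono hle _ hhI)
    obtain ⟨q, hq, hqs, hqh⟩ := Ideal.mem_span_image_pow_iff_exists_isHomogeneous.1 hhI
    have hgq : g + C (f k) * q ∈ (Ideal.span (f '' s)).map C := by
      refine hs (r + 1) _ (hg.add (by simpa using hq.C_mul (f k)))
        (add_mem hgs (Subalgebra.mul_mem _ (Subalgebra.algebraMap_mem _ _) hqs)) ?_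
      rw [map_add, map_mul, aeval_C, Algebra.algebraMap_self_apply, hqh, hfh, add_neg_cancel]
      exact zero_mem _
    have hfk : (C (f k) : MvPolynomial σ R) ∈ (Ideal.span (f '' insert k s)).map C :=
      Ideal.mem_map_of_mem _ (Ideal.subset_span ⟨k, Set.mem_insert k s, rfl⟩)
    have hgC : g ∈ (Ideal.span (f '' insert k s)).map C := by
      simpa using sub_mem (Ideal.map_mono hle hgq) (Ideal.mul_mem_right q _ hfk)
    rw [← divMonomial_add_modMonomial_single p k]
    exact add_mem (Ideal.mul_mem_left _ _ hhC) hgC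

theorem isQuasiRegularInDegree_setOf_val_lt {m : ℕ} (f : Fin m → R)
    (hreg : ∀ k : Fin m, ∀ x : R, x * f k ∈ Ideal.span (f '' {l | l < k}) →
      x ∈ Ideal.span (f '' {l | l < k}))
    {n : ℕ} (hn : n ≤ m) (r : ℕ) : IsQuasiRegularInDegree f {l : Fin m | (l : ℕ) < n} r := by
  induction n generalizing r with
  | zero => simpa using isQuasiRegularInDegree_empty f r
  | succ n ih =>
    have hset : {l : Fin m | (l : ℕ) < n + 1} =
        insert (⟨n, hn⟩ : Fin m) {l : Fin m | (l : ℕ) < n} := by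
      ext l
      simp only [Set.mem_ofPred_eq, Set.mem_insert_iff, Fin.ext_iff]
      omega
    rw [hset]
    exact isQuasiRegularInDegree_insert (ih (by omega)) (hreg ⟨n, hn⟩) r

end QuasiRegular

theorem associated_graded_iso_polynomial_of_regular_sequence_general
    {R : Type*} [CommRing R] {m : ℕ} (f : Fin m → R)
    (hreg : ∀ k : Fin m, ∀ r : R,
      r * f k ∈ Ideal.span (f '' {l : Fin m | l < k}) →
      r ∈ Ideal.span (f '' {l : Fin m | l < k}))
    (I : Ideal R) (hI : I = Ideal.span (Set.range f)) :
    (∀ r : ℕ, ∀ x ∈ I ^ r, ∃ p ∈ homogeneousSubmodule (Fin m) R r,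
        aeval f p = x) ∧
    (∀ r : ℕ, ∀ p ∈ homogeneousSubmodule (Fin m) R r,
        (aeval f p ∈ I ^ (r + 1) ↔ ∀ d : Fin m →₀ ℕ, coeff d p ∈ I)) := by
  rw [← Set.image_univ] at hI
  subst hI
  have hf : ∀ r, IsQuasiRegularInDegree f Set.univ r := fun r => by
    simpa using isQuasiRegularInDegree_setOf_val_lt f hreg le_rfl r
  refine ⟨fun r x hx => ?_, fun r p hp => ?_⟩
  · obtain ⟨p, hp, -, rfl⟩ := Ideal.mem_span_image_pow_iff_exists_isHomogeneous.1 hx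
    exact ⟨p, hp, rfl⟩
  · rw [mem_homogeneousSubmodule] at hp
    have hpu : p ∈ supported R Set.univ := by simp [supported_univ]
    rw [← mem_map_C_iff]
    exact ⟨hf r p hp hpu, aeval_mem_span_image_pow_succ hp hpu⟩

/-- Matsumura, Theorem 27: for `I = (f 0, ..., f (m-1))` generated by a regular
sequence, the associated graded ring `⊕ I^r/I^{r+1}` is isomorphic as a graded
`(R/I)`-algebra to the polynomial ring `(R/I)[x_1, ..., x_m]` with `x_j ↦ f_j`.
Equivalently (the quasi-regularity formulation used here): evaluation at `f` of
homogeneous polynomials of degree `r` surjects onto `I^r`, and a homogeneous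
polynomial of degree `r` evaluates into `I^{r+1}` exactly when all of its
coefficients lie in `I` (so each induced map
`(R/I)[x]_r → I^r/I^{r+1}` is bijective). -/
theorem associated_graded_iso_polynomial_of_regular_sequence
    {R : Type*} [CommRing R] {m : ℕ} (f : Fin m → R)
    (hreg : ∀ k : Fin m, ∀ r : R,
      r * f k ∈ Ideal.span (f '' {l : Fin m | l < k}) →
      r ∈ Ideal.span (f '' {l : Fin m | l < k}))
    (hproper : Ideal.span (Set.range f) ≠ ⊤)
    (I : Ideal R) (hI : I = Ideal.span (Set.range f)) :
    (∀ r : ℕ, ∀ x ∈ I ^ r, ∃ p ∈ homogeneousSubmodule (Fin m) R r,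
        aeval f p = x) ∧
    (∀ r : ℕ, ∀ p ∈ homogeneousSubmodule (Fin m) R r,
        (aeval f p ∈ I ^ (r + 1) ↔ ∀ d : Fin m →₀ ℕ, coeff d p ∈ I)) :=
  associated_graded_iso_polynomial_of_regular_sequence_general f hreg I hI
end
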